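/- arXiv:math/0703456 — 5 statements merged into one kernel-verified Lean document; each statement's English description precedes it below -/
import Mathlib

section
/- Let σ ⊂ ℝ^n be a Gorenstein cone with support Δ̃ = σ_(1). Suppose there exist nonzero lattice points e*_1, …, e*_r ∈ σ^∨ ∩ ℤ^n with e*_1 + ⋯ + e*_r = n_σ. Then e*_1, …, e*_r form part of a ℤ-basis of ℤ^n; for each i the polytope Δ̃_i := {x ∈ Δ̃ : ⟨x, e*_j⟩ = 0 for all j ≠ i} is nonempty and satisfies ⟨x, e*_i⟩ = 1 for all x ∈ Δ̃_i; the polytope Δ̃ equals the convex hull of Δ̃_1 ∪ ⋯ ∪ Δ̃_r; and the linear map x ↦ (⟨x, e*_1⟩, …, ⟨x, e*_r⟩) maps Δ̃ surjectively onto the unimodular simplex Conv(e_1, …, e_r) ⊂ ℝ^r. -/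
open Pointwise

noncomputable section

/-- A point of `ℝ^n` all of whose coordinates are integers (a lattice point of `ℤ^n`). -/
def IsLatticePt {n : ℕ} (x : Fin n → ℝ) : Prop := ∀ k, ∃ m : ℤ, x k = (m : ℝ)

/-- A lattice polytope: the convex hull of finitely many lattice points. -/
def IsLatticePoly {n : ℕ} (P : Set (Fin n → ℝ)) : Prop :=
  ∃ V : Finset (Fin n → ℝ), V.Nonempty ∧ (∀ v ∈ V, IsLatticePt v) ∧
    P = convexHull ℝ (V : Set (Fin n → ℝ))

/-- The standard inner product pairing on `ℝ^n`. -/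
def pairR {n : ℕ} (x y : Fin n → ℝ) : ℝ := ∑ k, x k * y k

/-- The dual polytope `P* = {y : ⟨x,y⟩ ≥ -1 ∀ x ∈ P}`. -/
def dualPoly {n : ℕ} (P : Set (Fin n → ℝ)) : Set (Fin n → ℝ) :=
  {y | ∀ x ∈ P, -1 ≤ pairR x y}

/-- A reflexive polytope: a lattice polytope with `0` in its interior whose dual
polytope is again a lattice polytope. -/
def IsReflexivePoly {n : ℕ} (P : Set (Fin n → ℝ)) : Prop :=
  IsLatticePoly P ∧ (0 : Fin n → ℝ) ∈ interior P ∧ IsLatticePoly (dualPoly P)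

/-- The dimension of a polytope: the dimension of the direction of its affine span. -/
def polyDim {n : ℕ} (P : Set (Fin n → ℝ)) : ℕ :=
  Module.finrank ℝ (affineSpan ℝ P).direction

/-- A (full-dimensional) Gorenstein polytope of index `r`: `rP` has `m` as its unique
interior lattice point and `rP - m` is reflexive. -/
def IsGorensteinPoly {n : ℕ} (P : Set (Fin n → ℝ)) (r : ℕ) (m : Fin n → ℝ) : Prop :=
  IsLatticePoly P ∧ IsLatticePt m ∧
  (∀ x, IsLatticePt x → (x ∈ interior ((r : ℝ) • P) ↔ x = m)) ∧
  IsReflexivePoly ((fun x => x - m) '' ((r : ℝ) • P))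

/-- `y` is a point of the lattice dual to the (saturated) lattice `ℤ^n ∩ W` inside `W`. -/
def IsDualLatticePt {n : ℕ} (W : Submodule ℝ (Fin n → ℝ)) (y : Fin n → ℝ) : Prop :=
  y ∈ W ∧ ∀ x ∈ W, IsLatticePt x → ∃ m : ℤ, pairR x y = (m : ℝ)

/-- Reflexivity of a (possibly lower-dimensional) lattice polytope inside its linear
span: `0` is in the relative interior and the dual polytope taken inside the linear
span is a lattice polytope with respect to the dual lattice. -/
def IsReflexiveIn {n : ℕ} (P : Set (Fin n → ℝ)) : Prop :=
  IsLatticePoly P ∧ (0 : Fin n → ℝ) ∈ intrinsicInterior ℝ P ∧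
  ∃ V : Finset (Fin n → ℝ), V.Nonempty ∧
    (∀ v ∈ V, IsDualLatticePt (Submodule.span ℝ P) v) ∧
    {y | y ∈ Submodule.span ℝ P ∧ ∀ x ∈ P, -1 ≤ pairR x y} =
      convexHull ℝ (V : Set (Fin n → ℝ))

/-- Gorenstein polytope of index `r` (possibly lower-dimensional): `rP` has `m` as its
unique relative-interior lattice point and `rP - m` is reflexive within its span. -/
def IsGorensteinIn {n : ℕ} (P : Set (Fin n → ℝ)) (r : ℕ) (m : Fin n → ℝ) : Prop :=
  IsLatticePoly P ∧ IsLatticePt m ∧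
  (∀ x, IsLatticePt x → (x ∈ intrinsicInterior ℝ ((r : ℝ) • P) ↔ x = m)) ∧
  IsReflexiveIn ((fun x => x - m) '' ((r : ℝ) • P))

/-- The Minkowski sum `Δ 0 + ⋯ + Δ (r-1)` of a family of sets. -/
def minkSum {n r : ℕ} (Δ : Fin r → Set (Fin n → ℝ)) : Set (Fin n → ℝ) :=
  {x | ∃ f : Fin r → (Fin n → ℝ), (∀ i, f i ∈ Δ i) ∧ x = ∑ i, f i}

/-- The Minkowski sum `Σ_{i ∈ I} Δ i`. -/
def minkSumOver {n r : ℕ} (I : Finset (Fin r)) (Δ : Fin r → Set (Fin n → ℝ)) :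
    Set (Fin n → ℝ) :=
  {x | ∃ f : Fin r → (Fin n → ℝ), (∀ i ∈ I, f i ∈ Δ i) ∧ x = ∑ i ∈ I, f i}

/-- The point `x × e_i ∈ ℝ^d × ℝ^r`. -/
def cayleyPt {d r : ℕ} (x : Fin d → ℝ) (i : Fin r) : Fin (d + r) → ℝ :=
  Fin.append x (fun j => if j = i then 1 else 0)

/-- The Cayley polytope `Δ 0 * ⋯ * Δ (r-1) ⊂ ℝ^d × ℝ^r`. -/
def cayley {d r : ℕ} (Δ : Fin r → Set (Fin d → ℝ)) : Set (Fin (d + r) → ℝ) :=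
  convexHull ℝ (⋃ i, (fun x => cayleyPt x i) '' Δ i)

/-- `F` is a facet of `P`: a nonempty exposed face of dimension one less. -/
def IsFacetOf {n : ℕ} (F P : Set (Fin n → ℝ)) : Prop :=
  IsExposed ℝ P F ∧ F.Nonempty ∧ polyDim F + 1 = polyDim P

/-- A special `(r-1)`-simplex of `P`: `r` affinely independent lattice points of `P`
such that every facet of `P` contains exactly `r - 1` of them. -/
def IsSpecialSimplex {n : ℕ} (P : Set (Fin n → ℝ)) (r : ℕ) (v : Fin r → Fin n → ℝ) : Prop :=
  (∀ i, IsLatticePt (v i) ∧ v i ∈ P) ∧ AffineIndependent ℝ v ∧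
  ∀ F, IsFacetOf F P → ∃! i, v i ∉ F

/-- `∇_i = {y : ⟨x,y⟩ ≥ -δ_{ij} ∀ x ∈ Δ_j ∀ j}`, the polytopes of the dual nef-partition. -/
def nefDual {d r : ℕ} (Δ : Fin r → Set (Fin d → ℝ)) (i : Fin r) : Set (Fin d → ℝ) :=
  {y | ∀ j, ∀ x ∈ Δ j, -(if i = j then (1 : ℝ) else 0) ≤ pairR x y}

/-- A centered nef-partition: lattice polytopes containing `0` whose Minkowski sum is a
reflexive polytope with `0` as its unique interior lattice point. -/
def IsCenteredNefPartition {d r : ℕ} (Δ : Fin r → Set (Fin d → ℝ)) : Prop :=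
  (∀ i, IsLatticePoly (Δ i) ∧ (0 : Fin d → ℝ) ∈ Δ i) ∧
  IsReflexivePoly (minkSum Δ) ∧
  ∀ x, IsLatticePt x → x ∈ interior (minkSum Δ) → x = 0

/-- Two centered nef-partitions dual to each other. -/
def AreDualNefPartitions {d r : ℕ} (Δ Nb : Fin r → Set (Fin d → ℝ)) : Prop :=
  IsCenteredNefPartition Δ ∧ IsCenteredNefPartition Nb ∧
  (∀ i, Nb i = nefDual Δ i) ∧ (∀ i, Δ i = nefDual Nb i)

/-- A Gorenstein cone with its distinguished lattice point `nσ`: a full-dimensional cone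
generated by finitely many lattice points on the hyperplane `⟨·, nσ⟩ = 1`. -/
def IsGorensteinCone {n : ℕ} (σ : Set (Fin n → ℝ)) (nσ : Fin n → ℝ) : Prop :=
  IsLatticePt nσ ∧ Submodule.span ℝ σ = ⊤ ∧
  ∃ V : Finset (Fin n → ℝ), V.Nonempty ∧
    (∀ v ∈ V, IsLatticePt v ∧ pairR v nσ = 1) ∧
    σ = {x | ∃ c : (Fin n → ℝ) → ℝ, (∀ v, 0 ≤ c v) ∧ x = ∑ v ∈ V, c v • v}

/-- The dual cone. -/
def dualCone {n : ℕ} (σ : Set (Fin n → ℝ)) : Set (Fin n → ℝ) :=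
  {y | ∀ x ∈ σ, 0 ≤ pairR x y}

/-- Integrally closed lattice polytope: every lattice point of `k • P` is a sum of `k`
lattice points of `P`. -/
def IntegrallyClosed {n : ℕ} (P : Set (Fin n → ℝ)) : Prop :=
  ∀ (k : ℕ) (x : Fin n → ℝ), IsLatticePt x → x ∈ (k : ℝ) • P →
    ∃ v : Fin k → (Fin n → ℝ), (∀ j, IsLatticePt (v j) ∧ v j ∈ P) ∧ x = ∑ j, v j

/-! Every generator `v` of `σ` is a lattice point with `⟨v, n_σ⟩ = 1`, so the integers
`⟨v, e*_j⟩ ≥ 0` sum to `1`: exactly one of them is `1`, and `v ∈ Δ̃_i` for that `i`. Every `i`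
occurs, for otherwise `e*_i` would vanish on the full-dimensional cone `σ`. Hence
`Δ̃ = Conv(generators)` is the convex hull of the `Δ̃_i` and maps onto `Conv(e_1, …, e_r)`.
Generators `v_i ∈ Δ̃_i` satisfy `⟨v_i, e*_j⟩ = δ_ij`, so `x ↦ (⟨v_j, x⟩)_j` splits
`ℤ^n ≅ ℤ^r × ker`, and a basis of the kernel completes `e*_1, …, e*_r` to a `ℤ`-basis. -/

/-- `ψ` splits `M ≃ (ι → R) × ker ψ`, and `ker ψ` is free as a submodule of a free module over
a PID. -/
theorem exists_basis_extending_of_map_eq_single {R M ι : Type*} [CommRing R] [IsDomain R]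
    [IsPrincipalIdealRing R] [AddCommGroup M] [Module R M] [Module.Free R M] [Module.Finite R M]
    [Fintype ι] [DecidableEq ι] (E : ι → M) (ψ : M →ₗ[R] ι → R)
    (hψ : ∀ i, ψ (E i) = Pi.single i 1) :
    ∃ (m : ℕ) (B : Module.Basis (ι ⊕ Fin m) R M), ∀ i, B (Sum.inl i) = E i := by
  set ε : (ι → R) →ₗ[R] M := Fintype.linearCombination R E
  have hψε : ∀ c, ψ (ε c) = c := fun c => by
    ext j
    simp [ε, Fintype.linearCombination_apply, hψ, Finset.sum_apply, Pi.single_apply]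
  let split : ((ι → R) × LinearMap.ker ψ) ≃ₗ[R] M :=
    LinearEquiv.ofBijective (ε.coprod (LinearMap.ker ψ).subtype) ⟨?_, ?_⟩
  · obtain ⟨m, bK⟩ := Submodule.basisOfPid (Module.Free.chooseBasis R M) (LinearMap.ker ψ)
    refine ⟨m, ((Pi.basisFun R ι).prod bK).map split, fun i => ?_⟩
    rw [Module.Basis.map_apply, Module.Basis.prod_apply, Sum.elim_inl]
    show ε.coprod (LinearMap.ker ψ).subtype (LinearMap.inl R _ _ (Pi.basisFun R ι i)) = E i
    simp [ε]
  · rw [← LinearMap.ker_eq_bot, LinearMap.ker_eq_bot']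
    rintro ⟨c, k, hk⟩ h
    have hc : c = 0 := by simpa [hψε, LinearMap.mem_ker.1 hk] using congrArg ψ h
    subst hc
    simpa using h
  · intro x
    exact ⟨(ψ x, ⟨x - ε (ψ x), by simp [hψε]⟩), by simp⟩

theorem exists_basis_fin_extending_of_map_eq_single {R M ι : Type*} [CommRing R] [IsDomain R]
    [IsPrincipalIdealRing R] [AddCommGroup M] [Module R M] [Module.Free R M] [Module.Finite R M]
    [Fintype ι] [DecidableEq ι] {n : ℕ} (hn : Module.finrank R M = n) (E : ι → M)
    (ψ : M →ₗ[R] ι → R) (hψ : ∀ i, ψ (E i) = Pi.single i 1) :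
    ∃ (B : Module.Basis (Fin n) R M) (f : ι → Fin n), Function.Injective f ∧ ∀ i, B (f i) = E i := by
  obtain ⟨m, B, hB⟩ := exists_basis_extending_of_map_eq_single E ψ hψ
  let g : ι ⊕ Fin m ≃ Fin n :=
    Fintype.equivFinOfCardEq (by rw [← hn, Module.finrank_eq_card_basis B])
  exact ⟨B.reindex g, g ∘ Sum.inl, g.injective.comp Sum.inl_injective,
    fun i => by simp [hB]⟩

lemma pairR_eq_dotProduct {n : ℕ} (x y : Fin n → ℝ) : pairR x y = x ⬝ᵥ y := rfl

def pairingMap {n : ℕ} {ι : Type*} (e : ι → Fin n → ℝ) : (Fin n → ℝ) →ₗ[ℝ] ι → ℝ where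
  toFun x i := pairR x (e i)
  map_add' x y := funext fun i => add_dotProduct x y (e i)
  map_smul' c x := funext fun i => smul_dotProduct c x (e i)

lemma pairingMap_apply {n : ℕ} {ι : Type*} (e : ι → Fin n → ℝ) (x : Fin n → ℝ) (i : ι) :
    pairingMap e x i = pairR x (e i) := rfl

lemma isLatticePt_iff {n : ℕ} {x : Fin n → ℝ} :
    IsLatticePt x ↔ ∃ z : Fin n → ℤ, Int.cast ∘ z = x := by
  simp only [IsLatticePt, funext_iff, Function.comp_apply, eq_comm (b := x _), Classical.skolem]

lemma pairR_intCast {n : ℕ} (X Y : Fin n → ℤ) :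
    pairR (Int.cast ∘ X) (Int.cast ∘ Y) = ((X ⬝ᵥ Y : ℤ) : ℝ) :=
  ((Int.castRingHom ℝ).map_dotProduct X Y).symm

lemma isLatticePt_intCast {n : ℕ} (z : Fin n → ℤ) : IsLatticePt (Int.cast ∘ z : Fin n → ℝ) :=
  isLatticePt_iff.2 ⟨z, rfl⟩

lemma exists_int_coeffs_of_isLatticePt {n : ℕ} (B : Module.Basis (Fin n) ℤ (Fin n → ℤ))
    {x : Fin n → ℝ} (hx : IsLatticePt x) :
    ∃ c : Fin n → ℤ, x = ∑ k, (c k : ℝ) • (Int.cast ∘ B k : Fin n → ℝ) := by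
  obtain ⟨z, rfl⟩ := isLatticePt_iff.1 hx
  refine ⟨B.repr z, ?_⟩
  conv_lhs => rw [← B.sum_repr z]
  ext j
  simp [Finset.sum_apply]

lemma linearIndependent_intCast_basis {n : ℕ} (B : Module.Basis (Fin n) ℤ (Fin n → ℤ)) :
    LinearIndependent ℝ fun k => (Int.cast ∘ B k : Fin n → ℝ) := by
  refine linearIndependent_of_top_le_span_of_card_eq_finrank ?_ (by simp)
  have hlattice : ∀ x : Fin n → ℝ, IsLatticePt x →
      x ∈ Submodule.span ℝ (Set.range fun k => (Int.cast ∘ B k : Fin n → ℝ)) := by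
    intro x hx
    obtain ⟨c, rfl⟩ := exists_int_coeffs_of_isLatticePt B hx
    exact Submodule.sum_mem _ fun k _ => Submodule.smul_mem _ _ (Submodule.subset_span ⟨k, rfl⟩)
  rw [← (Pi.basisFun ℝ (Fin n)).span_eq, Submodule.span_le]
  rintro _ ⟨k, rfl⟩
  refine hlattice _ fun j => ⟨(Pi.single k 1 : Fin n → ℤ) j, ?_⟩
  simp [Pi.single_apply]

theorem exists_lattice_basis_extending {n : ℕ} {ι : Type*} [Fintype ι] [DecidableEq ι]
    (e v : ι → Fin n → ℝ) (he : ∀ i, IsLatticePt (e i)) (hv : ∀ i, IsLatticePt (v i))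
    (hδ : ∀ j, pairingMap e (v j) = Pi.single j 1) :
    ∃ b : Fin n → Fin n → ℝ,
      LinearIndependent ℝ b ∧ (∀ k, IsLatticePt (b k)) ∧
      (∀ x, IsLatticePt x → ∃ c : Fin n → ℤ, x = ∑ k, (c k : ℝ) • b k) ∧
      ∃ f : ι → Fin n, Function.Injective f ∧ ∀ i, b (f i) = e i := by
  choose E hE using fun i => isLatticePt_iff.1 (he i)
  choose W hW using fun i => isLatticePt_iff.1 (hv i)
  have hψ : ∀ i, (Matrix.of W).mulVecLin (E i) = Pi.single i 1 := fun i => by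
    ext j
    apply Int.cast_injective (α := ℝ)
    change ((W j ⬝ᵥ E i : ℤ) : ℝ) = _
    rw [← pairR_intCast, hW, hE, ← pairingMap_apply, hδ]
    simp [Pi.single_apply, eq_comm]
  obtain ⟨B, f, hf, hB⟩ :=
    exists_basis_fin_extending_of_map_eq_single (Module.finrank_fin_fun ℤ) E _ hψ
  exact ⟨fun k => Int.cast ∘ B k, linearIndependent_intCast_basis B,
    fun k => isLatticePt_intCast (B k), fun x hx => exists_int_coeffs_of_isLatticePt B hx,
    f, hf, fun i => by simp only [hB, hE]⟩

lemma exists_eq_single_of_sum_eq_one {ι : Type*} [Fintype ι] [DecidableEq ι] (m : ι → ℕ)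
    (hm : ∑ i, m i = 1) : ∃ i, m = Pi.single i 1 := by
  obtain ⟨i, hi⟩ := (Finsupp.sum_eq_one_iff (Finsupp.equivFunOnFinite.symm m)).1
    (by simpa [Finsupp.sum_fintype] using hm)
  exact ⟨i, by rw [← Finsupp.single_eq_pi_single, ← hi, Finsupp.coe_equivFunOnFinite_symm]⟩

lemma exists_nat_eq_pairR {n : ℕ} {x y : Fin n → ℝ} (hx : IsLatticePt x) (hy : IsLatticePt y)
    (hxy : 0 ≤ pairR x y) : ∃ m : ℕ, pairR x y = m := by
  obtain ⟨X, rfl⟩ := isLatticePt_iff.1 hx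
  obtain ⟨Y, rfl⟩ := isLatticePt_iff.1 hy
  rw [pairR_intCast] at hxy ⊢
  lift X ⬝ᵥ Y to ℕ using (by exact_mod_cast hxy) with m
  exact ⟨m, by norm_cast⟩

lemma exists_pairingMap_eq_single {n : ℕ} {ι : Type*} [Fintype ι] [DecidableEq ι]
    {e : ι → Fin n → ℝ} {v : Fin n → ℝ} (hv : IsLatticePt v) (he : ∀ i, IsLatticePt (e i))
    (hnonneg : ∀ i, 0 ≤ pairR v (e i)) (hsum : pairR v (∑ i, e i) = 1) :
    ∃ i, pairingMap e v = Pi.single i 1 := by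
  choose m hm using fun i => exists_nat_eq_pairR hv (he i) (hnonneg i)
  have hm1 : ∑ i, m i = 1 := by
    rw [pairR_eq_dotProduct, dotProduct_sum] at hsum
    exact_mod_cast (Finset.sum_congr rfl fun i _ => (hm i).symm).trans hsum
  obtain ⟨i, hi⟩ := exists_eq_single_of_sum_eq_one m hm1
  refine ⟨i, funext fun j => ?_⟩
  rw [pairingMap_apply, hm, hi]
  simp [Pi.single_apply]

def conicalHull {n : ℕ} (V : Finset (Fin n → ℝ)) : Set (Fin n → ℝ) :=
  {x | ∃ c : (Fin n → ℝ) → ℝ, (∀ v, 0 ≤ c v) ∧ x = ∑ v ∈ V, c v • v}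

lemma subset_conicalHull {n : ℕ} (V : Finset (Fin n → ℝ)) : ↑V ⊆ conicalHull V := by
  intro v hv
  refine ⟨Pi.single v 1, fun w => ?_, ?_⟩
  · rw [Pi.single_apply]; split_ifs <;> norm_num
  · rw [Finset.sum_eq_single_of_mem v hv fun w _ hw => by simp [hw]]
    simp

lemma pairR_sum_smul {n : ℕ} {V : Finset (Fin n → ℝ)} {u : Fin n → ℝ} (c : (Fin n → ℝ) → ℝ) :
    pairR (∑ v ∈ V, c v • v) u = ∑ v ∈ V, c v * pairR v u := by
  simp only [pairR_eq_dotProduct, sum_dotProduct, smul_dotProduct, smul_eq_mul]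

lemma conicalHull_inter_eq_convexHull {n : ℕ} {V : Finset (Fin n → ℝ)} {u : Fin n → ℝ}
    (hV : ∀ v ∈ V, pairR v u = 1) :
    conicalHull V ∩ {x | pairR x u = 1} = convexHull ℝ ↑V := by
  have hweight : ∀ c : (Fin n → ℝ) → ℝ, pairR (∑ v ∈ V, c v • v) u = ∑ v ∈ V, c v := fun c => by
    rw [pairR_sum_smul]
    exact Finset.sum_congr rfl fun v hv => by rw [hV v hv, mul_one]
  ext x
  rw [Finset.mem_convexHull']
  constructor
  · rintro ⟨⟨c, hc, rfl⟩, hx⟩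
    exact ⟨c, fun v _ => hc v, (hweight c).symm.trans hx, rfl⟩
  · rintro ⟨w, hw, hw1, rfl⟩
    have hmax : ∑ v ∈ V, max (w v) 0 • v = ∑ v ∈ V, w v • v :=
      Finset.sum_congr rfl fun v hv => by rw [max_eq_left (hw v hv)]
    exact ⟨⟨fun v => max (w v) 0, fun v => le_max_right _ _, hmax.symm⟩,
      (hweight w).trans hw1⟩

lemma eq_zero_of_pairR_eq_zero {n : ℕ} {V : Finset (Fin n → ℝ)} {y : Fin n → ℝ}
    (hspan : Submodule.span ℝ (conicalHull V) = ⊤) (hy : ∀ v ∈ V, pairR v y = 0) : y = 0 := by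
  have hcone : ∀ x ∈ conicalHull V, pairR x y = 0 := by
    rintro _ ⟨c, -, rfl⟩
    rw [pairR_sum_smul]
    exact Finset.sum_eq_zero fun v hv => by rw [hy v hv, mul_zero]
  have hker : Submodule.span ℝ (conicalHull V) ≤ LinearMap.ker (pairingMap fun _ : Unit => y) :=
    Submodule.span_le.2 fun x hx => LinearMap.mem_ker.2 (funext fun _ => hcone x hx)
  rw [hspan] at hker
  exact dotProduct_self_eq_zero.1 (congrFun (LinearMap.mem_ker.1 (hker Submodule.mem_top)) ())

lemma pairR_eq_zero_of_pairingMap_eq_single {n : ℕ} {ι : Type*} [DecidableEq ι]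
    {e : ι → Fin n → ℝ} {v : Fin n → ℝ} {i j : ι} (hv : pairingMap e v = Pi.single i 1)
    (hj : j ≠ i) : pairR v (e j) = 0 := by
  rw [← pairingMap_apply, hv, Pi.single_eq_of_ne hj]

lemma pairR_eq_one_of_pairR_sum_eq_one {n : ℕ} {ι : Type*} [Fintype ι] {e : ι → Fin n → ℝ}
    {x : Fin n → ℝ} {i : ι} (hx : pairR x (∑ j, e j) = 1)
    (hother : ∀ j, j ≠ i → pairR x (e j) = 0) : pairR x (e i) = 1 := by
  have hsum : ∑ j, pairR x (e j) = 1 := by rwa [pairR_eq_dotProduct, dotProduct_sum] at hx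
  rwa [Finset.sum_eq_single i (fun j _ hj => hother j hj) (by simp)] at hsum

lemma exists_mem_pairingMap_eq_single {n : ℕ} {ι : Type*} [DecidableEq ι]
    {V : Finset (Fin n → ℝ)} {e : ι → Fin n → ℝ} (hspan : Submodule.span ℝ (conicalHull V) = ⊤)
    (htype : ∀ v ∈ V, ∃ i, pairingMap e v = Pi.single i 1) {i : ι} (hi : e i ≠ 0) :
    ∃ v ∈ V, pairingMap e v = Pi.single i 1 := by
  by_contra! h
  refine hi (eq_zero_of_pairR_eq_zero hspan fun v hv => ?_)
  obtain ⟨j, hj⟩ := htype v hv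
  exact pairR_eq_zero_of_pairingMap_eq_single hj fun hij => h v hv (hij ▸ hj)

lemma image_pairingMap_convexHull {n : ℕ} {ι : Type*} [DecidableEq ι]
    {V : Finset (Fin n → ℝ)} {e : ι → Fin n → ℝ}
    (htype : ∀ v ∈ V, ∃ i, pairingMap e v = Pi.single i 1)
    (hvertex : ∀ i, ∃ v ∈ V, pairingMap e v = Pi.single i 1) :
    pairingMap e '' convexHull ℝ ↑V = convexHull ℝ (Set.range fun i => Pi.single i 1) := by
  rw [LinearMap.image_convexHull]
  congr 1
  ext y
  constructor
  · rintro ⟨v, hv, rfl⟩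
    obtain ⟨i, hi⟩ := htype v hv
    exact ⟨i, hi.symm⟩
  · rintro ⟨i, rfl⟩
    exact hvertex i

theorem gorenstein_cone_cayley_structure_general {n r : ℕ}
    (σ : Set (Fin n → ℝ)) (nσ : Fin n → ℝ)
    (hσ : IsGorensteinCone σ nσ)
    (e : Fin r → Fin n → ℝ)
    (hne : ∀ i, e i ≠ 0)
    (hlat : ∀ i, IsLatticePt (e i))
    (hdual : ∀ i, e i ∈ dualCone σ)
    (hsum : ∑ i, e i = nσ) :
    (∃ b : Fin n → Fin n → ℝ,
        LinearIndependent ℝ b ∧ (∀ k, IsLatticePt (b k)) ∧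
        (∀ x, IsLatticePt x → ∃ c : Fin n → ℤ, x = ∑ k, (c k : ℝ) • b k) ∧
        ∃ f : Fin r → Fin n, Function.Injective f ∧ ∀ i, b (f i) = e i) ∧
    (∀ i : Fin r,
        ({x ∈ σ ∩ {x | pairR x nσ = 1} | ∀ j, j ≠ i → pairR x (e j) = 0}).Nonempty ∧
        ∀ x ∈ {x ∈ σ ∩ {x | pairR x nσ = 1} | ∀ j, j ≠ i → pairR x (e j) = 0},
          pairR x (e i) = 1) ∧
    (σ ∩ {x | pairR x nσ = 1} =
      convexHull ℝ
        (⋃ i, {x ∈ σ ∩ {x | pairR x nσ = 1} | ∀ j, j ≠ i → pairR x (e j) = 0})) ∧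
    ((fun x => fun i => pairR x (e i)) '' (σ ∩ {x | pairR x nσ = 1}) =
      convexHull ℝ (Set.range fun i : Fin r => (Pi.single i 1 : Fin r → ℝ))) := by
  obtain ⟨-, hspan, V, -, hV, hσV⟩ := hσ
  change σ = conicalHull V at hσV
  subst hσV hsum
  have hslice := conicalHull_inter_eq_convexHull fun v hv => (hV v hv).2
  have htype : ∀ v ∈ V, ∃ i, pairingMap e v = Pi.single i 1 := fun v hv =>
    exists_pairingMap_eq_single (hV v hv).1 hlat
      (fun i => hdual i v (subset_conicalHull V hv)) (hV v hv).2
  have hvertex : ∀ i, ∃ v ∈ V, pairingMap e v = Pi.single i 1 := fun i =>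
    exists_mem_pairingMap_eq_single hspan htype (hne i)
  choose vtx hvtxV hvtx using hvertex
  refine ⟨exists_lattice_basis_extending e vtx hlat (fun i => (hV _ (hvtxV i)).1) hvtx,
    fun i => ⟨?_, fun x hx => pairR_eq_one_of_pairR_sum_eq_one hx.1.2 hx.2⟩, ?_, ?_⟩
  · exact ⟨vtx i, hslice ▸ subset_convexHull ℝ _ (hvtxV i),
      fun j hj => pairR_eq_zero_of_pairingMap_eq_single (hvtx i) hj⟩
  · refine subset_antisymm ?_ (convexHull_min (Set.iUnion_subset fun i x hx => hx.1)
      (hslice ▸ convex_convexHull ℝ _))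
    rw [hslice]
    refine convexHull_mono fun v hv => ?_
    obtain ⟨i, hi⟩ := htype v hv
    exact Set.mem_iUnion.2 ⟨i, hslice ▸ subset_convexHull ℝ _ hv,
      fun j hj => pairR_eq_zero_of_pairingMap_eq_single hi hj⟩
  · change pairingMap e '' _ = _
    rw [hslice, image_pairingMap_convexHull htype fun i => ⟨vtx i, hvtxV i, hvtx i⟩]

/-- If a Gorenstein cone `σ` admits nonzero lattice points
`e*_1, …, e*_r ∈ σ^∨` with `e*_1 + ⋯ + e*_r = n_σ`, then they form part of a `ℤ`-basis
of `ℤ^n`, the polytopes `Δ̃_i` are nonempty with `⟨·, e*_i⟩ = 1` on them, the support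
`Δ̃` is the convex hull of their union, and `x ↦ (⟨x,e*_1⟩, …, ⟨x,e*_r⟩)` maps `Δ̃`
onto the unimodular simplex. -/
theorem gorenstein_cone_cayley_structure {n r : ℕ} (hr : 0 < r)
    (σ : Set (Fin n → ℝ)) (nσ : Fin n → ℝ)
    (hσ : IsGorensteinCone σ nσ)
    (e : Fin r → Fin n → ℝ)
    (hne : ∀ i, e i ≠ 0)
    (hlat : ∀ i, IsLatticePt (e i))
    (hdual : ∀ i, e i ∈ dualCone σ)
    (hsum : ∑ i, e i = nσ) :
    (∃ b : Fin n → Fin n → ℝ,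
        LinearIndependent ℝ b ∧ (∀ k, IsLatticePt (b k)) ∧
        (∀ x, IsLatticePt x → ∃ c : Fin n → ℤ, x = ∑ k, (c k : ℝ) • b k) ∧
        ∃ f : Fin r → Fin n, Function.Injective f ∧ ∀ i, b (f i) = e i) ∧
    (∀ i : Fin r,
        ({x ∈ σ ∩ {x | pairR x nσ = 1} | ∀ j, j ≠ i → pairR x (e j) = 0}).Nonempty ∧
        ∀ x ∈ {x ∈ σ ∩ {x | pairR x nσ = 1} | ∀ j, j ≠ i → pairR x (e j) = 0},
          pairR x (e i) = 1) ∧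
    (σ ∩ {x | pairR x nσ = 1} =
      convexHull ℝ
        (⋃ i, {x ∈ σ ∩ {x | pairR x nσ = 1} | ∀ j, j ≠ i → pairR x (e j) = 0})) ∧
    ((fun x => fun i => pairR x (e i)) '' (σ ∩ {x | pairR x nσ = 1}) =
      convexHull ℝ (Set.range fun i : Fin r => (Pi.single i 1 : Fin r → ℝ))) :=
  gorenstein_cone_cayley_structure_general σ nσ hσ e hne hlat hdual hsum
end
end

section
/- Let ∇ ⊂ ℝ^d be a d-dimensional Gorenstein polytope of index r, and let m be the unique interior lattice point of r∇. Let n_1, …, n_r be affinely independent lattice points of ∇ and S := Conv(n_1, …, n_r). Then S is a special (r−1)-simplex of ∇ if and only if S is not contained in the boundary ∂∇; and in this case n_1 + ⋯ + n_r = m. -/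
open Pointwise

noncomputable section

/-!
Translate to the reflexive polytope `P = r∇ - m` and the lattice points `w i = r • v i - m ∈ P`.
For a lattice point `u` of `P*` the integers `w i ⬝ᵥ u` are `≥ -1` and sum to
`r * ((∑ i, v i - m) ⬝ᵥ u)`.

If no face `{y ∈ P | y ⬝ᵥ u = -1}` with `u ∈ P*` contains all the `w i`, the sum exceeds `-r` at
every vertex `u` of `P*`. So `∑ i, v i - m` is interior to `P`, which makes `∑ i, v i` an interior
lattice point of `r∇`, namely `m`. Conversely, if `∑ i, v i = m`, take the lattice normal `u` of a
facet through a lattice point `x₀`. Then every `w i ⬝ᵥ u` is `≡ -1 (mod r)` and the values sum to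
`0`, so exactly one of them is not `-1`: the simplex is special.

Being special and not lying in `∂∇` each rule out a face containing all the `w i`. Such a face lies
in a facet, which would then contain every vertex of the simplex. And an interior point of `∇` in
the simplex is sent into the interior of `P`, where `y ⬝ᵥ u > -1`. Finally `∑ i, v i = m` puts the
interior point `m / r` of `∇` into the simplex.
-/

open Matrix Set Filter Topology

section Pairing

variable {n : ℕ}

lemma mem_dualPoly {P : Set (Fin n → ℝ)} {y : Fin n → ℝ} :
    y ∈ dualPoly P ↔ ∀ x ∈ P, -1 ≤ x ⬝ᵥ y :=
  Iff.rfl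

lemma exists_dotProduct_eq (l : (Fin n → ℝ) →ₗ[ℝ] ℝ) : ∃ w, ∀ x, l x = x ⬝ᵥ w := by
  classical
  exact ⟨fun i => l fun j => if i = j then 1 else 0, fun x => l.pi_apply_eq_sum_univ x⟩

lemma dotProduct_self_pos {u : Fin n → ℝ} (hu : u ≠ 0) : 0 < u ⬝ᵥ u :=
  lt_of_le_of_ne (Finset.sum_nonneg fun i _ => mul_self_nonneg (u i))
    (Ne.symm (dotProduct_self_eq_zero.not.2 hu))

lemma ne_zero_of_dotProduct_eq_neg_one {x u : Fin n → ℝ} (h : x ⬝ᵥ u = -1) : u ≠ 0 := by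
  rintro rfl
  simp at h

end Pairing

namespace IsLatticePt

variable {n : ℕ} {x y : Fin n → ℝ}

lemma sub (hx : IsLatticePt x) (hy : IsLatticePt y) : IsLatticePt (x - y) := fun k => by
  obtain ⟨a, ha⟩ := hx k
  obtain ⟨b, hb⟩ := hy k
  exact ⟨a - b, by simp [ha, hb]⟩

lemma natCast_smul (r : ℕ) (hx : IsLatticePt x) : IsLatticePt ((r : ℝ) • x) := fun k => by
  obtain ⟨a, ha⟩ := hx k
  exact ⟨r * a, by simp [ha]⟩

lemma sum {ι : Type*} [Fintype ι] {v : ι → Fin n → ℝ} (hv : ∀ i, IsLatticePt (v i)) :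
    IsLatticePt (∑ i, v i) := fun k => by
  choose a ha using fun i => hv i k
  exact ⟨∑ i, a i, by simp [ha]⟩

lemma exists_dotProduct_eq_intCast (hx : IsLatticePt x) (hy : IsLatticePt y) :
    ∃ k : ℤ, x ⬝ᵥ y = k := by
  choose a ha using hx
  choose b hb using hy
  exact ⟨∑ k, a k * b k, by simp [dotProduct, ha, hb]⟩

end IsLatticePt

section Halfspaces

variable {n : ℕ} {P : Set (Fin n → ℝ)}

lemma dotProduct_lt_of_mem_interior {u y : Fin n → ℝ} {c : ℝ} (hu : u ≠ 0)
    (hP : ∀ x ∈ P, x ⬝ᵥ u ≤ c) (hy : y ∈ interior P) : y ⬝ᵥ u < c := by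
  have hline : Tendsto (fun t : ℝ => y + t • u) (𝓝 0) (𝓝 y) := by
    have hc : Continuous fun t : ℝ => y + t • u := by fun_prop
    simpa using hc.tendsto 0
  have hev : ∀ᶠ t in 𝓝[>] (0 : ℝ), y + t • u ∈ P :=
    (hline.eventually (mem_interior_iff_mem_nhds.1 hy)).filter_mono nhdsWithin_le_nhds
  obtain ⟨t, ht, htpos⟩ := (hev.and self_mem_nhdsWithin).exists
  have := hP _ ht
  rw [add_dotProduct, smul_dotProduct, smul_eq_mul] at this
  nlinarith [dotProduct_self_pos hu]

lemma neg_one_lt_dotProduct_of_mem_interior {u y : Fin n → ℝ} (hu : u ∈ dualPoly P)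
    (hy : y ∈ interior P) : -1 < y ⬝ᵥ u := by
  rcases eq_or_ne u 0 with rfl | hu0
  · simp
  have := dotProduct_lt_of_mem_interior (neg_ne_zero.2 hu0) (c := 1)
    (fun x hx => by simpa [dotProduct_neg] using neg_le_neg (mem_dualPoly.1 hu x hx)) hy
  rw [dotProduct_neg] at this
  linarith

lemma mem_of_forall_mem_dualPoly (hconv : Convex ℝ P) (hcl : IsClosed P)
    (h0 : (0 : Fin n → ℝ) ∈ P) {x : Fin n → ℝ} (hx : ∀ y ∈ dualPoly P, -1 ≤ x ⬝ᵥ y) :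
    x ∈ P := by
  by_contra hxP
  obtain ⟨l, s, hl, hs⟩ := geometric_hahn_banach_closed_point hconv hcl hxP
  obtain ⟨w, hw⟩ := exists_dotProduct_eq (l : (Fin n → ℝ) →ₗ[ℝ] ℝ)
  simp only [ContinuousLinearMap.coe_coe] at hw
  have hs0 : 0 < s := by simpa using hl 0 h0
  have hdual : (-s⁻¹) • w ∈ dualPoly P := mem_dualPoly.2 fun a ha => by
    have := hl a ha
    rw [hw] at this
    rw [dotProduct_smul, smul_eq_mul, neg_mul, neg_le_neg_iff, inv_mul_le_iff₀ hs0]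
    linarith
  have := hx _ hdual
  rw [dotProduct_smul, smul_eq_mul, neg_mul, neg_le_neg_iff, inv_mul_le_iff₀ hs0, ← hw] at this
  linarith

lemma setOf_forall_neg_one_lt_subset_interior (hconv : Convex ℝ P) (hcl : IsClosed P)
    (h0 : (0 : Fin n → ℝ) ∈ P) {U : Finset (Fin n → ℝ)}
    (hU : dualPoly P = convexHull ℝ (U : Set (Fin n → ℝ))) :
    {y | ∀ u ∈ U, -1 < y ⬝ᵥ u} ⊆ interior P := by
  have hopen : IsOpen {y : Fin n → ℝ | ∀ u ∈ U, -1 < y ⬝ᵥ u} := by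
    simp only [ofPred_forall]
    exact isOpen_biInter_finset fun u _ => isOpen_lt continuous_const (by fun_prop)
  refine interior_maximal (fun y hy => mem_of_forall_mem_dualPoly hconv hcl h0 ?_) hopen
  intro z hz
  rw [hU] at hz
  exact convexHull_min (fun u hu => (hy u hu).le)
    (convex_halfSpace_ge (dotProductBilin ℝ ℝ y).isLinear (-1)) hz

end Halfspaces

section Dimension

variable {n : ℕ} {F : Set (Fin n → ℝ)}

lemma vectorSpan_le_ker {u : Fin n → ℝ} {c : ℝ} (hF : ∀ y ∈ F, y ⬝ᵥ u = c) :
    vectorSpan ℝ F ≤ LinearMap.ker ((dotProductBilin ℝ ℝ).flip u) := by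
  rw [vectorSpan_def, Submodule.span_le]
  rintro _ ⟨y, hy, y', hy', rfl⟩
  simp [hF y hy, hF y' hy']

lemma finrank_ker_dotProduct_add_one {u : Fin n → ℝ} (hu : u ≠ 0) :
    Module.finrank ℝ (LinearMap.ker ((dotProductBilin ℝ ℝ).flip u)) + 1 = n := by
  have hf : (dotProductBilin ℝ ℝ).flip u ≠ 0 := fun h => by
    simpa [(dotProduct_self_pos hu).ne'] using LinearMap.congr_fun h u
  rw [Module.Dual.finrank_ker_add_one_of_ne_zero hf, Module.finrank_fin_fun]

lemma polyDim_add_one_le {u : Fin n → ℝ} {c : ℝ} (hu : u ≠ 0) (hF : ∀ y ∈ F, y ⬝ᵥ u = c) :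
    polyDim F + 1 ≤ n := by
  have := Submodule.finrank_mono (vectorSpan_le_ker hF)
  rw [polyDim, direction_affineSpan]
  linarith [finrank_ker_dotProduct_add_one hu]

lemma polyDim_eq_of_interior_nonempty {P : Set (Fin n → ℝ)} (h : (interior P).Nonempty) :
    polyDim P = n := by
  rw [polyDim,
    affineSpan_eq_top_of_nonempty_interior (h.mono (interior_mono (subset_convexHull ℝ P))),
    AffineSubspace.direction_top, finrank_top, Module.finrank_fin_fun]

/-- A set of codimension one lies in a unique hyperplane. -/
lemma dotProduct_eq_of_polyDim_add_one_eq {u w : Fin n → ℝ} {a b : ℝ} (hdim : polyDim F + 1 = n)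
    (hu : ∀ y ∈ F, y ⬝ᵥ u = a) (hw : ∀ y ∈ F, y ⬝ᵥ w = b) (hw0 : w ≠ 0) {y₀ y : Fin n → ℝ}
    (hy₀ : y₀ ∈ F) (hy : y ⬝ᵥ w = b) : y ⬝ᵥ u = a := by
  have hspan : vectorSpan ℝ F = LinearMap.ker ((dotProductBilin ℝ ℝ).flip w) := by
    refine Submodule.eq_of_le_of_finrank_eq (vectorSpan_le_ker hw) ?_
    rw [polyDim, direction_affineSpan] at hdim
    have := finrank_ker_dotProduct_add_one hw0
    omega
  have hmem : y - y₀ ∈ vectorSpan ℝ F := by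
    rw [hspan]
    simp [hy, hw y₀ hy₀]
  have := vectorSpan_le_ker hu hmem
  simp only [LinearMap.mem_ker, LinearMap.flip_apply, dotProductBilin_apply_apply,
    sub_dotProduct, hu y₀ hy₀, sub_eq_zero] at this
  exact this

lemma exists_ne_zero_forall_dotProduct_eq_zero (hdim : polyDim F + 1 < n) :
    ∃ z ≠ 0, ∀ y ∈ F, y ⬝ᵥ z = 0 := by
  have hlt : Submodule.span ℝ F < ⊤ := by
    refine Submodule.lt_top_of_finrank_lt_finrank ?_
    calc Module.finrank ℝ (Submodule.span ℝ F)
        ≤ Module.finrank ℝ (vectorSpan ℝ (insert 0 (affineSpan ℝ F : Set (Fin n → ℝ)))) := by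
          refine Submodule.finrank_mono (Submodule.span_le.2 fun y hy => ?_)
          simpa using vsub_mem_vectorSpan ℝ (mem_insert_of_mem 0 (mem_affineSpan ℝ hy))
            (mem_insert 0 _)
      _ ≤ polyDim F + 1 := finrank_vectorSpan_insert_le _ _
      _ < _ := by rwa [Module.finrank_fin_fun]
  obtain ⟨f, hf0, hle⟩ := Submodule.exists_le_ker_of_lt_top _ hlt
  obtain ⟨z, hz⟩ := exists_dotProduct_eq f
  refine ⟨z, fun h => hf0 (LinearMap.ext fun x => by simp [hz, h]), fun y hy => ?_⟩
  rw [← hz]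
  exact hle (Submodule.subset_span hy)

end Dimension

section Faces

variable {n : ℕ} {P : Set (Fin n → ℝ)}

def exposedFace (P : Set (Fin n → ℝ)) (u : Fin n → ℝ) : Set (Fin n → ℝ) :=
  {y ∈ P | y ⬝ᵥ u = -1}

lemma exposedFace_isExposed {u : Fin n → ℝ} (hu : u ∈ dualPoly P) :
    IsExposed ℝ P (exposedFace P u) := by
  rintro ⟨y₀, hy₀P, hy₀⟩
  refine ⟨LinearMap.toContinuousLinearMap ((dotProductBilin ℝ ℝ).flip (-u)), ?_⟩
  ext x
  simp only [exposedFace, mem_ofPred_eq, LinearMap.coe_toContinuousLinearMap', LinearMap.flip_apply,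
    dotProductBilin_apply_apply, dotProduct_neg, neg_le_neg_iff, and_congr_right_iff]
  intro hx
  have hle := mem_dualPoly.1 hu
  exact ⟨fun h y hy => h ▸ hle y hy, fun h => le_antisymm (hy₀ ▸ h y₀ hy₀P) (hle x hx)⟩

lemma IsExposed.exists_eq_exposedFace {F : Set (Fin n → ℝ)} (h0 : (0 : Fin n → ℝ) ∈ interior P)
    (hF : IsExposed ℝ P F) (hne : F.Nonempty) (hFP : F ≠ P) :
    ∃ u ∈ dualPoly P, F = exposedFace P u := by
  obtain ⟨l, rfl⟩ := hF hne
  obtain ⟨y₀, hy₀P, hy₀⟩ := hne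
  obtain ⟨w, hw⟩ := exists_dotProduct_eq (l : (Fin n → ℝ) →ₗ[ℝ] ℝ)
  simp only [ContinuousLinearMap.coe_coe] at hw
  simp only [hw] at hy₀ hFP ⊢
  set c := y₀ ⬝ᵥ w
  have hw0 : w ≠ 0 := by
    rintro rfl
    exact hFP (by simp)
  have hc : 0 < c := by simpa using dotProduct_lt_of_mem_interior hw0 hy₀ h0
  have hface : ∀ x ∈ P, x ⬝ᵥ ((-c⁻¹) • w) = -1 ↔ x ⬝ᵥ w = c := fun x _ => by
    rw [dotProduct_smul, smul_eq_mul, neg_mul, neg_inj, inv_mul_eq_one₀ hc.ne', eq_comm]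
  refine ⟨(-c⁻¹) • w, mem_dualPoly.2 fun x hx => ?_, ?_⟩
  · rw [dotProduct_smul, smul_eq_mul, neg_mul, neg_le_neg_iff, inv_mul_le_iff₀ hc, mul_one]
    exact hy₀ x hx
  · ext x
    simp only [exposedFace, mem_ofPred_eq, and_congr_right_iff]
    intro hx
    rw [hface x hx]
    exact ⟨fun h => le_antisymm (hy₀ x hx) (h y₀ hy₀P), fun h y hy => h ▸ hy₀ y hy⟩

/-- The `w ∈ P*` equal to `-1` on the face of `u` form a compact extreme subset of `P*`, so any
extreme point of that subset will do. -/
lemma exists_mem_extremePoints_exposedFace_subset (hD : IsCompact (dualPoly P)) {u : Fin n → ℝ}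
    (hu : u ∈ dualPoly P) :
    ∃ w ∈ (dualPoly P).extremePoints ℝ, exposedFace P u ⊆ exposedFace P w := by
  set K := dualPoly P ∩ ⋂ y ∈ exposedFace P u, {w | y ⬝ᵥ w = -1}
  have hKext : IsExtreme ℝ (dualPoly P) K := by
    refine ⟨inter_subset_left, fun w₁ hw₁ w₂ hw₂ w hw hseg => ⟨hw₁, mem_iInter₂.2 fun y hy => ?_⟩⟩
    obtain ⟨a, b, ha, hb, hab, rfl⟩ := hseg
    have h := mem_iInter₂.1 hw.2 y hy
    have h₁ := mem_dualPoly.1 hw₁ y hy.1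
    have h₂ := mem_dualPoly.1 hw₂ y hy.1
    simp only [mem_ofPred_eq, dotProduct_add, dotProduct_smul, smul_eq_mul] at h ⊢
    nlinarith
  have hKcpt : IsCompact K :=
    hD.of_isClosed_subset (hD.isClosed.inter (isClosed_biInter fun y _ =>
      isClosed_eq (by fun_prop) continuous_const)) inter_subset_left
  obtain ⟨w, hw⟩ := hKcpt.extremePoints_nonempty
    ⟨u, hu, mem_iInter₂.2 fun y hy => hy.2⟩
  refine ⟨w, hKext.extremePoints_subset_extremePoints hw, fun y hy => ⟨hy.1, ?_⟩⟩
  exact mem_iInter₂.1 hw.1.2 y hy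

end Faces

lemma eq_zero_of_mem_extremePoints {E : Type*} [AddCommGroup E] [Module ℝ E] {A : Set E} {x z : E}
    (hx : x ∈ A.extremePoints ℝ) (h : ∀ᶠ t in 𝓝 (0 : ℝ), x + t • z ∈ A) : z = 0 := by
  have hneg : ∀ᶠ t in 𝓝 (0 : ℝ), x + (-t) • z ∈ A :=
    (continuous_neg.tendsto' (0 : ℝ) 0 neg_zero).eventually h
  obtain ⟨t, ⟨ht₁, ht₂⟩, htpos⟩ :=
    ((h.and hneg).filter_mono nhdsWithin_le_nhds |>.and (self_mem_nhdsWithin (s := Ioi 0))).exists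
  rw [neg_smul, ← sub_eq_add_neg] at ht₂
  have := hx.2 ht₂ ht₁ (mem_openSegment_sub_add x (t • z))
  rw [sub_eq_self, smul_eq_zero] at this
  exact this.resolve_left (ne_of_gt htpos)

section Facets

variable {n : ℕ} {P : Set (Fin n → ℝ)}

lemma mem_dualPoly_convexHull {W : Set (Fin n → ℝ)} {y : Fin n → ℝ}
    (h : ∀ x ∈ W, -1 ≤ x ⬝ᵥ y) : y ∈ dualPoly (convexHull ℝ W) := fun _ hx =>
  convexHull_min h (convex_halfSpace_ge ((dotProductBilin ℝ ℝ).flip y).isLinear (-1)) hx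

/-- Moving `w` orthogonally to its face keeps it in the dual polytope for a while: only the
finitely many vertices off the face constrain the motion, and they do so strictly. -/
lemma eventually_add_smul_mem_dualPoly {W : Finset (Fin n → ℝ)}
    (hW : P = convexHull ℝ (W : Set (Fin n → ℝ))) {w z : Fin n → ℝ} (hw : w ∈ dualPoly P)
    (hz : ∀ y ∈ exposedFace P w, y ⬝ᵥ z = 0) : ∀ᶠ t in 𝓝 (0 : ℝ), w + t • z ∈ dualPoly P := by
  have hWP : ∀ x ∈ W, x ∈ P := fun x hx => hW ▸ subset_convexHull ℝ _ hx
  have hev : ∀ x ∈ W, ∀ᶠ t in 𝓝 (0 : ℝ), -1 ≤ x ⬝ᵥ (w + t • z) := by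
    intro x hx
    simp only [dotProduct_add, dotProduct_smul, smul_eq_mul]
    rcases (mem_dualPoly.1 hw x (hWP x hx)).eq_or_lt with htight | hlt
    · refine Eventually.of_forall fun t => ?_
      rw [hz x ⟨hWP x hx, htight.symm⟩, ← htight]
      simp
    · have hc : Continuous fun t : ℝ => x ⬝ᵥ w + t * x ⬝ᵥ z := by fun_prop
      exact (hc.tendsto' 0 _ (by simp)).eventually_const_lt hlt |>.mono fun _ => le_of_lt
  filter_upwards [(eventually_all_finset W).2 hev] with t ht
  rw [hW]
  exact mem_dualPoly_convexHull ht

lemma exposedFace_isFacetOf {W : Finset (Fin n → ℝ)} (hW : P = convexHull ℝ (W : Set (Fin n → ℝ)))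
    (h0 : (0 : Fin n → ℝ) ∈ interior P) {w : Fin n → ℝ} (hw : w ∈ (dualPoly P).extremePoints ℝ)
    (hne : (exposedFace P w).Nonempty) : IsFacetOf (exposedFace P w) P := by
  refine ⟨exposedFace_isExposed hw.1, hne, ?_⟩
  rw [polyDim_eq_of_interior_nonempty ⟨0, h0⟩]
  obtain ⟨y₀, -, hy₀⟩ := hne
  refine le_antisymm (polyDim_add_one_le (ne_zero_of_dotProduct_eq_neg_one hy₀) fun y hy => hy.2) ?_
  by_contra! hlt
  obtain ⟨z, hz0, hz⟩ := exists_ne_zero_forall_dotProduct_eq_zero hlt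
  exact hz0 (eq_zero_of_mem_extremePoints hw (eventually_add_smul_mem_dualPoly hW hw.1 hz))

lemma IsFacetOf.exists_eq_exposedFace {F : Set (Fin n → ℝ)} (h0 : (0 : Fin n → ℝ) ∈ interior P)
    (hD : IsCompact (dualPoly P)) (hF : IsFacetOf F P) :
    ∃ w ∈ (dualPoly P).extremePoints ℝ, F = exposedFace P w := by
  obtain ⟨hexp, hne, hdim⟩ := hF
  rw [polyDim_eq_of_interior_nonempty ⟨0, h0⟩] at hdim
  have hFP : F ≠ P := by
    rintro rfl
    rw [polyDim_eq_of_interior_nonempty ⟨0, h0⟩] at hdim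
    omega
  obtain ⟨u, hu, rfl⟩ := hexp.exists_eq_exposedFace h0 hne hFP
  obtain ⟨w, hw, hsub⟩ := exists_mem_extremePoints_exposedFace_subset hD hu
  obtain ⟨y₀, hy₀⟩ := hne
  refine ⟨w, hw, hsub.antisymm fun y hy => ⟨hy.1, ?_⟩⟩
  exact dotProduct_eq_of_polyDim_add_one_eq hdim (fun y hy => hy.2) (fun y hy => (hsub hy).2)
    (ne_zero_of_dotProduct_eq_neg_one (hsub hy₀).2) hy₀ hy.2

lemma exists_isFacetOf_superset {W : Finset (Fin n → ℝ)}
    (hW : P = convexHull ℝ (W : Set (Fin n → ℝ))) (h0 : (0 : Fin n → ℝ) ∈ interior P)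
    (hD : IsCompact (dualPoly P)) {u : Fin n → ℝ} (hu : u ∈ dualPoly P)
    (hne : (exposedFace P u).Nonempty) : ∃ F, IsFacetOf F P ∧ exposedFace P u ⊆ F := by
  obtain ⟨w, hw, hsub⟩ := exists_mem_extremePoints_exposedFace_subset hD hu
  exact ⟨_, exposedFace_isFacetOf hW h0 hw (hne.mono hsub), hsub⟩

end Facets

section AffineEquiv

lemma IsExposed.image_affineEquiv {E : Type*} [NormedAddCommGroup E] [NormedSpace ℝ E]
    [FiniteDimensional ℝ E] (e : E ≃ᵃ[ℝ] E) {A B : Set E} (h : IsExposed ℝ A B) :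
    IsExposed ℝ (e '' A) (e '' B) := by
  intro hne
  obtain ⟨l, rfl⟩ := h hne.of_image
  refine ⟨LinearMap.toContinuousLinearMap ((l : E →ₗ[ℝ] ℝ) ∘ₗ (e.symm.linear : E →ₗ[ℝ] E)), ?_⟩
  have hmono : ∀ x y, l y ≤ l x ↔ l (e.symm.linear (e y)) ≤ l (e.symm.linear (e x)) := by
    intro x y
    have := congrArg l ((e.symm : E →ᵃ[ℝ] E).linearMap_vsub (e y) (e x))
    simp only [AffineEquiv.linear_toAffineMap, vsub_eq_sub, AffineEquiv.coe_toAffineMap,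
      AffineEquiv.symm_apply_apply, map_sub, LinearEquiv.coe_coe] at this
    constructor <;> intro h <;> linarith
  ext z
  constructor
  · rintro ⟨x, ⟨hx, hmax⟩, rfl⟩
    exact ⟨mem_image_of_mem e hx,
      forall_mem_image.2 fun y hy => by simpa using (hmono x y).1 (hmax y hy)⟩
  · rintro ⟨⟨x, hx, rfl⟩, hmax⟩
    exact ⟨x, ⟨hx, fun y hy => (hmono x y).2 (by simpa using hmax (e y) (mem_image_of_mem e hy))⟩,
      rfl⟩

variable {n : ℕ}

lemma polyDim_image_affineEquiv (e : (Fin n → ℝ) ≃ᵃ[ℝ] (Fin n → ℝ)) (S : Set (Fin n → ℝ)) :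
    polyDim (e '' S) = polyDim S := by
  have := AffineSubspace.map_span (e : (Fin n → ℝ) →ᵃ[ℝ] (Fin n → ℝ)) S
  rw [AffineEquiv.coe_toAffineMap] at this
  rw [polyDim, polyDim, ← this, AffineSubspace.map_direction, AffineEquiv.linear_toAffineMap]
  exact e.linear.finrank_map_eq _

lemma IsFacetOf.image_affineEquiv (e : (Fin n → ℝ) ≃ᵃ[ℝ] (Fin n → ℝ)) {F P : Set (Fin n → ℝ)}
    (h : IsFacetOf F P) : IsFacetOf (e '' F) (e '' P) :=
  ⟨h.1.image_affineEquiv e, h.2.1.image e,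
    by rw [polyDim_image_affineEquiv, polyDim_image_affineEquiv, h.2.2]⟩

lemma isFacetOf_image_affineEquiv_iff (e : (Fin n → ℝ) ≃ᵃ[ℝ] (Fin n → ℝ))
    {F P : Set (Fin n → ℝ)} : IsFacetOf (e '' F) (e '' P) ↔ IsFacetOf F P := by
  refine ⟨fun h => ?_, IsFacetOf.image_affineEquiv e⟩
  simpa [image_image] using h.image_affineEquiv e.symm

lemma AffineEquiv.image_interior (e : (Fin n → ℝ) ≃ᵃ[ℝ] (Fin n → ℝ)) (S : Set (Fin n → ℝ)) :
    e '' interior S = interior (e '' S) :=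
  e.toContinuousAffineEquiv.toHomeomorph.image_interior S

end AffineEquiv

namespace IsLatticePoly

variable {n : ℕ} {P : Set (Fin n → ℝ)}

lemma convex (hP : IsLatticePoly P) : Convex ℝ P := by
  obtain ⟨V, -, -, rfl⟩ := hP
  exact convex_convexHull ℝ _

lemma isCompact (hP : IsLatticePoly P) : IsCompact P := by
  obtain ⟨V, -, -, rfl⟩ := hP
  exact V.finite_toSet.isCompact_convexHull (𝕜 := ℝ)

lemma isLatticePt_of_mem_extremePoints (hP : IsLatticePoly P) {x : Fin n → ℝ}
    (hx : x ∈ P.extremePoints ℝ) : IsLatticePt x := by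
  obtain ⟨V, -, hV, rfl⟩ := hP
  exact hV x (extremePoints_convexHull_subset hx)

lemma exists_isLatticePt_mem (hP : IsLatticePoly P) {F : Set (Fin n → ℝ)}
    (hF : IsExposed ℝ P F) (hne : F.Nonempty) : ∃ x ∈ F, IsLatticePt x := by
  have hFcpt : IsCompact F :=
    hP.isCompact.of_isClosed_subset (hF.isClosed hP.isCompact.isClosed) hF.subset
  obtain ⟨x, hx⟩ := hFcpt.extremePoints_nonempty hne
  exact ⟨x, hx.1,
    hP.isLatticePt_of_mem_extremePoints (hF.isExtreme.extremePoints_subset_extremePoints hx)⟩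

end IsLatticePoly

section Reflexive

variable {n : ℕ} {ι : Type*} {P : Set (Fin n → ℝ)}

def NotOnCommonFace (P : Set (Fin n → ℝ)) (w : ι → Fin n → ℝ) : Prop :=
  ∀ u ∈ dualPoly P, ∃ i, w i ⬝ᵥ u ≠ -1

lemma notOnCommonFace_of_mem_interior {w : ι → Fin n → ℝ} {y : Fin n → ℝ}
    (hy : y ∈ convexHull ℝ (range w)) (hint : y ∈ interior P) : NotOnCommonFace P w := by
  intro u hu
  by_contra! htight
  have : y ⬝ᵥ u = -1 := convexHull_min (range_subset_iff.2 htight)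
    (convex_hyperplane ((dotProductBilin ℝ ℝ).flip u).isLinear (-1)) hy
  exact (neg_one_lt_dotProduct_of_mem_interior hu hint).ne' this

lemma neg_card_lt_sum_of_neg_one_le [Fintype ι] {a : ι → ℝ} (hint : ∀ i, ∃ k : ℤ, a i = k)
    (hle : ∀ i, -1 ≤ a i) {i₀ : ι} (hi₀ : a i₀ ≠ -1) : -(Fintype.card ι : ℝ) < ∑ i, a i := by
  have hnonneg : 0 ≤ a i₀ := by
    obtain ⟨k, hk⟩ := hint i₀
    have hk₁ : (-1 : ℤ) < k := by exact_mod_cast hk ▸ (hle i₀).lt_of_ne' hi₀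
    rw [hk]
    exact_mod_cast (show (0 : ℤ) ≤ k by omega)
  calc -(Fintype.card ι : ℝ) = ∑ _i : ι, (-1 : ℝ) := by simp
    _ < ∑ i, a i := Finset.sum_lt_sum (fun i _ => hle i) ⟨i₀, Finset.mem_univ _, by linarith⟩

/-- For each vertex `u` of `P*` the integers `w i ⬝ᵥ u ≥ -1` are not all `-1`, so their mean
exceeds `-1`. -/
lemma IsReflexivePoly.inv_smul_sum_mem_interior [Fintype ι] (hP : IsReflexivePoly P)
    {w : ι → Fin n → ℝ} (hw : ∀ i, IsLatticePt (w i) ∧ w i ∈ P) (hQ : NotOnCommonFace P w) :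
    (Fintype.card ι : ℝ)⁻¹ • ∑ i, w i ∈ interior P := by
  obtain ⟨hPl, h0, U, -, hUl, hU⟩ := hP
  refine setOf_forall_neg_one_lt_subset_interior hPl.convex hPl.isCompact.isClosed
    (interior_subset h0) hU fun u hu => ?_
  have hud : u ∈ dualPoly P := hU ▸ subset_convexHull ℝ _ hu
  obtain ⟨i₀, hi₀⟩ := hQ u hud
  have hlt := neg_card_lt_sum_of_neg_one_le (a := fun i => w i ⬝ᵥ u)
    (fun i => (hw i).1.exists_dotProduct_eq_intCast (hUl u hu))
    (fun i => mem_dualPoly.1 hud _ (hw i).2) hi₀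
  have hcard : (0 : ℝ) < Fintype.card ι := Nat.cast_pos.2 (Fintype.card_pos_iff.2 ⟨i₀⟩)
  rw [smul_dotProduct, sum_dotProduct, smul_eq_mul, lt_inv_mul_iff₀ hcard]
  linarith

end Reflexive

lemma existsUnique_ne_zero_of_sum_eq_one {ι : Type*} [Fintype ι] {c : ι → ℤ}
    (h0 : ∀ i, 0 ≤ c i) (h1 : ∑ i, c i = 1) : ∃! i, c i ≠ 0 := by
  classical
  obtain ⟨i, -, hi⟩ := Finset.exists_ne_zero_of_sum_ne_zero (h1.trans_ne one_ne_zero)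
  refine ⟨i, hi, fun j hj => by_contra fun hji => ?_⟩
  have := Finset.single_le_sum (fun k _ => h0 k) (Finset.mem_erase.2 ⟨hji, Finset.mem_univ j⟩)
  rw [← Finset.add_sum_erase _ _ (Finset.mem_univ i)] at h1
  have := (h0 i).lt_of_ne' hi
  have := (h0 j).lt_of_ne' hj
  omega

/-- The values `(r • v i - m) ⬝ᵥ u = r * ((v i - x₀) ⬝ᵥ u) - 1` are `≡ -1 (mod r)` and `≥ -1`,
and they sum to `0`: so all but one of them equal `-1`. -/
lemma existsUnique_dotProduct_ne_of_sum_eq {n r : ℕ} (hr : 0 < r) {u x₀ m : Fin n → ℝ}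
    {v : Fin r → Fin n → ℝ} (hu : IsLatticePt u) (hx₀ : IsLatticePt x₀)
    (hv : ∀ i, IsLatticePt (v i)) (hx₀u : ((r : ℝ) • x₀ - m) ⬝ᵥ u = -1)
    (hle : ∀ i, -1 ≤ ((r : ℝ) • v i - m) ⬝ᵥ u) (hsum : ∑ i, v i = m) :
    ∃! i, ((r : ℝ) • v i - m) ⬝ᵥ u ≠ -1 := by
  choose c hc using fun i => ((hv i).sub hx₀).exists_dotProduct_eq_intCast hu
  have hval : ∀ i, ((r : ℝ) • v i - m) ⬝ᵥ u = r * c i - 1 := fun i => by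
    rw [← hc i]
    simp only [sub_dotProduct, smul_dotProduct, smul_eq_mul] at hx₀u ⊢
    linear_combination hx₀u
  have hr' : (0 : ℝ) < r := by exact_mod_cast hr
  have hc0 : ∀ i, 0 ≤ c i := fun i => by
    have := hle i
    rw [hval i] at this
    have : (0 : ℝ) ≤ c i := (mul_nonneg_iff_of_pos_left hr').1 (by linarith)
    exact_mod_cast this
  have hc1 : ∑ i, c i = 1 := by
    have : ((∑ i, c i : ℤ) : ℝ) = 1 := by
      push_cast
      simp only [← hc, ← sum_dotProduct, Finset.sum_sub_distrib, hsum, Finset.sum_const,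
        Finset.card_univ, Fintype.card_fin, ← Nat.cast_smul_eq_nsmul ℝ]
      rw [← neg_sub, neg_dotProduct, hx₀u, neg_neg]
    exact_mod_cast this
  simp only [hval, sub_eq_neg_self, ne_eq, mul_eq_zero, hr'.ne', Int.cast_eq_zero, false_or]
  exact existsUnique_ne_zero_of_sum_eq_one hc0 hc1

section SmulSub

variable {E : Type*} [AddCommGroup E] [Module ℝ E]

def smulSubEquiv (c : ℝ) (hc : c ≠ 0) (m : E) : E ≃ᵃ[ℝ] E :=
  (LinearEquiv.smulOfNeZero ℝ E c hc).toAffineEquiv.trans (AffineEquiv.constVAdd ℝ E (-m))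

@[simp] lemma smulSubEquiv_apply {c : ℝ} (hc : c ≠ 0) (m x : E) :
    smulSubEquiv c hc m x = c • x - m := by
  simp [smulSubEquiv, neg_add_eq_sub]

lemma image_sub_smul_eq_image_smulSubEquiv {c : ℝ} (hc : c ≠ 0) (m : E) (S : Set E) :
    (fun x => x - m) '' (c • S) = smulSubEquiv c hc m '' S := by
  rw [← image_smul, image_image]
  simp

end SmulSub

namespace IsGorensteinPoly

variable {d r : ℕ} {Nb : Set (Fin d → ℝ)} {m : Fin d → ℝ} {v : Fin r → Fin d → ℝ}

lemma sum_eq_of_notOnCommonFace (hG : IsGorensteinPoly Nb r m) (hr : 0 < r)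
    (hv : ∀ i, IsLatticePt (v i) ∧ v i ∈ Nb)
    (hQ : NotOnCommonFace ((fun x => x - m) '' ((r : ℝ) • Nb)) fun i => (r : ℝ) • v i - m) :
    ∑ i, v i = m := by
  obtain ⟨-, hm, hint, hP'⟩ := hG
  have hw : ∀ i, IsLatticePt ((r : ℝ) • v i - m) ∧
      (r : ℝ) • v i - m ∈ (fun x => x - m) '' ((r : ℝ) • Nb) := fun i =>
    ⟨((hv i).1.natCast_smul r).sub hm, mem_image_of_mem _ (smul_mem_smul_set (hv i).2)⟩
  have h := hP'.inv_smul_sum_mem_interior hw hQ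
  have hbary : (Fintype.card (Fin r) : ℝ)⁻¹ • ∑ i, ((r : ℝ) • v i - m) = ∑ i, v i - m := by
    rw [Finset.sum_sub_distrib, ← Finset.smul_sum, Finset.sum_const, Finset.card_univ,
      Fintype.card_fin, ← Nat.cast_smul_eq_nsmul ℝ, ← smul_sub, smul_smul,
      inv_mul_cancel₀ (by positivity), one_smul]
  have hinterior : interior ((fun x => x - m) '' ((r : ℝ) • Nb)) =
      (fun x => x - m) '' interior ((r : ℝ) • Nb) :=
    ((Homeomorph.subRight m).image_interior _).symm
  rw [hbary, hinterior, (sub_left_injective (b := m)).mem_set_image] at h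
  exact (hint _ (IsLatticePt.sum fun i => (hv i).1)).1 h

lemma not_subset_frontier_of_sum_eq (hG : IsGorensteinPoly Nb r m) (hr : 0 < r)
    (hsum : ∑ i, v i = m) : ¬ convexHull ℝ (range v) ⊆ frontier Nb := by
  obtain ⟨-, hm, hint, -⟩ := hG
  have hmint := (hint m hm).2 rfl
  rw [interior_smul₀ (by positivity)] at hmint
  obtain ⟨p, hp, hpm⟩ := hmint
  have hphull : p ∈ convexHull ℝ (range v) := by
    have : p = Finset.univ.centerMass (fun _ => (1 : ℝ)) v := by
      simp [Finset.centerMass, hsum, ← hpm, smul_smul, (show (r : ℝ) ≠ 0 by positivity)]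
    rw [this]
    exact Finset.centerMass_mem_convexHull _ (by simp) (by simp [hr]) (by simp)
  exact fun hsub => (hsub hphull).2 hp

lemma notOnCommonFace_of_not_subset_frontier (hG : IsGorensteinPoly Nb r m) (hr : 0 < r)
    (hv : ∀ i, v i ∈ Nb) (h : ¬ convexHull ℝ (range v) ⊆ frontier Nb) :
    NotOnCommonFace ((fun x => x - m) '' ((r : ℝ) • Nb)) fun i => (r : ℝ) • v i - m := by
  obtain ⟨p, hp, hpfr⟩ := not_subset.1 h
  have hpNb : p ∈ Nb := convexHull_min (range_subset_iff.2 hv) hG.1.convex hp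
  have hpint : p ∈ interior Nb := by_contra fun h => hpfr ⟨subset_closure hpNb, h⟩
  have hr' : (r : ℝ) ≠ 0 := by positivity
  set T := smulSubEquiv (r : ℝ) hr' m
  refine notOnCommonFace_of_mem_interior (y := T p) ?_ ?_
  · have := mem_image_of_mem T hp
    rw [← AffineEquiv.coe_toAffineMap, AffineMap.image_convexHull, ← range_comp] at this
    simpa only [T, Function.comp_def, AffineEquiv.coe_toAffineMap, smulSubEquiv_apply] using this
  · rw [image_sub_smul_eq_image_smulSubEquiv hr', ← T.image_interior]
    exact mem_image_of_mem T hpint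

lemma notOnCommonFace_of_forall_facet (hG : IsGorensteinPoly Nb r m) (hr : 0 < r)
    (hv : ∀ i, v i ∈ Nb) (hsp : ∀ F, IsFacetOf F Nb → ∃! i, v i ∉ F) :
    NotOnCommonFace ((fun x => x - m) '' ((r : ℝ) • Nb)) fun i => (r : ℝ) • v i - m := by
  obtain ⟨-, -, -, ⟨W, -, -, hW⟩, h0, hD⟩ := hG
  have hr' : (r : ℝ) ≠ 0 := by positivity
  set T := smulSubEquiv (r : ℝ) hr' m
  rw [image_sub_smul_eq_image_smulSubEquiv hr' m] at hW h0 hD ⊢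
  intro u hu
  by_contra! htight
  have hface : ∀ i, T (v i) ∈ exposedFace (T '' Nb) u := fun i =>
    ⟨mem_image_of_mem T (hv i), by simpa only [T, smulSubEquiv_apply] using htight i⟩
  obtain ⟨F', hF', hsub⟩ :=
    exists_isFacetOf_superset hW h0 hD.isCompact hu ⟨_, hface ⟨0, hr⟩⟩
  have hF : IsFacetOf (T.symm '' F') Nb := by
    rwa [← isFacetOf_image_affineEquiv_iff T, image_image,
      image_congr fun x _ => T.apply_symm_apply x, image_id']
  obtain ⟨i, hi, -⟩ := hsp _ hF
  exact hi ⟨T (v i), hsub (hface i), T.symm_apply_apply _⟩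

lemma forall_existsUnique_notMem_of_sum_eq (hG : IsGorensteinPoly Nb r m) (hr : 0 < r)
    (hv : ∀ i, IsLatticePt (v i) ∧ v i ∈ Nb) (hsum : ∑ i, v i = m) :
    ∀ F, IsFacetOf F Nb → ∃! i, v i ∉ F := by
  obtain ⟨hNb, -, -, -, h0, hD⟩ := hG
  intro F hF
  have hr' : (r : ℝ) ≠ 0 := by positivity
  set T := smulSubEquiv (r : ℝ) hr' m
  rw [image_sub_smul_eq_image_smulSubEquiv hr' m] at h0 hD
  obtain ⟨u, hu, hFu⟩ := (hF.image_affineEquiv T).exists_eq_exposedFace h0 hD.isCompact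
  have hmemF : ∀ x ∈ Nb, x ∈ F ↔ ((r : ℝ) • x - m) ⬝ᵥ u = -1 := fun x hx => by
    rw [← T.injective.mem_set_image, hFu, exposedFace, mem_ofPred_eq,
      and_iff_right (mem_image_of_mem T hx)]
    simp only [T, smulSubEquiv_apply]
  obtain ⟨x₀, hx₀F, hx₀⟩ := hNb.exists_isLatticePt_mem hF.1 hF.2.1
  have hle : ∀ i, -1 ≤ ((r : ℝ) • v i - m) ⬝ᵥ u := fun i => by
    simpa only [T, smulSubEquiv_apply] using mem_dualPoly.1 hu.1 _ (mem_image_of_mem T (hv i).2)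
  have := existsUnique_dotProduct_ne_of_sum_eq hr (hD.isLatticePt_of_mem_extremePoints hu) hx₀
    (fun i => (hv i).1) ((hmemF x₀ (hF.1.subset hx₀F)).1 hx₀F) hle hsum
  simpa [hmemF _ (hv _).2] using this

end IsGorensteinPoly

theorem special_simplex_iff_not_in_boundary_general {d r : ℕ} (hr : 0 < r)
    (Nb : Set (Fin d → ℝ)) (m : Fin d → ℝ)
    (hG : IsGorensteinPoly Nb r m)
    (v : Fin r → Fin d → ℝ)
    (hv : ∀ i, IsLatticePt (v i) ∧ v i ∈ Nb)
    (hai : AffineIndependent ℝ v) :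
    (IsSpecialSimplex Nb r v ↔ ¬ (convexHull ℝ (Set.range v) ⊆ frontier Nb)) ∧
    (IsSpecialSimplex Nb r v → ∑ i, v i = m) := by
  have hmem : ∀ i, v i ∈ Nb := fun i => (hv i).2
  have sum_eq_of_special : IsSpecialSimplex Nb r v → ∑ i, v i = m := fun h =>
    hG.sum_eq_of_notOnCommonFace hr hv (hG.notOnCommonFace_of_forall_facet hr hmem h.2.2)
  have special_of_sum_eq : ∑ i, v i = m → IsSpecialSimplex Nb r v := fun h =>
    ⟨hv, hai, hG.forall_existsUnique_notMem_of_sum_eq hr hv h⟩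
  refine ⟨⟨fun h => hG.not_subset_frontier_of_sum_eq hr (sum_eq_of_special h), fun h => ?_⟩,
    sum_eq_of_special⟩
  exact special_of_sum_eq (hG.sum_eq_of_notOnCommonFace hr hv
    (hG.notOnCommonFace_of_not_subset_frontier hr hmem h))

/-- For a `d`-dimensional Gorenstein polytope `∇` of index `r` with `m`
the unique interior lattice point of `r∇`, and affinely independent lattice points
`n_1, …, n_r` of `∇`: their convex hull is a special `(r-1)`-simplex of `∇` iff it is not
contained in the boundary of `∇`; and in this case `n_1 + ⋯ + n_r = m`. -/
theorem special_simplex_iff_not_in_boundary {d r : ℕ} (hr : 0 < r)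
    (Nb : Set (Fin d → ℝ)) (m : Fin d → ℝ)
    (hG : IsGorensteinPoly Nb r m)
    (hd : polyDim Nb = d)
    (v : Fin r → Fin d → ℝ)
    (hv : ∀ i, IsLatticePt (v i) ∧ v i ∈ Nb)
    (hai : AffineIndependent ℝ v) :
    (IsSpecialSimplex Nb r v ↔ ¬ (convexHull ℝ (Set.range v) ⊆ frontier Nb)) ∧
    (IsSpecialSimplex Nb r v → ∑ i, v i = m) :=
  special_simplex_iff_not_in_boundary_general hr Nb m hG v hv hai
end
end

section
/- Let ∇ ⊂ ℝ^d be a d-dimensional Gorenstein polytope of index r, and let m be the unique interior lattice point of r∇. If Conv(n_1, …, n_r) and Conv(n'_1, …, n'_r) are special (r−1)-simplices of ∇, then n_1 + ⋯ + n_r = n'_1 + ⋯ + n'_r = m; in particular, all special (r−1)-simplices of ∇ have the same barycenter m/r. -/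
open Pointwise

noncomputable section

/-!
The vertex sum `s` of a special simplex is a lattice point of `r∇`, so it equals `m` as soon as
it lies in the interior of `r∇`. If it did not, a functional supporting `r∇` at `s` would be
maximized over `∇` at every vertex, so all vertices would lie on one proper face of `∇`. Tilting
the functional enlarges this face, vertex by vertex, until it becomes a facet; that facet would
contain all `r` vertices, whereas a special simplex has a vertex off every facet.
-/

open Finset Module

section MaxFace

variable {E : Type*} [AddCommGroup E] [Module ℝ E]

def maxFace (V : Finset E) (f : E →ₗ[ℝ] ℝ) : Finset E :=
  V.filter fun v => ∀ w ∈ V, f w ≤ f v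

variable {V : Finset E} {f g : E →ₗ[ℝ] ℝ} {v w x : E}

lemma mem_maxFace : v ∈ maxFace V f ↔ v ∈ V ∧ ∀ w ∈ V, f w ≤ f v := mem_filter

lemma maxFace_subset : maxFace V f ⊆ V := filter_subset _ _

lemma maxFace_nonempty (hV : V.Nonempty) : (maxFace V f).Nonempty := by
  obtain ⟨v, hv, hmax⟩ := V.exists_max_image f hV
  exact ⟨v, mem_maxFace.2 ⟨hv, hmax⟩⟩

lemma apply_eq_of_mem_maxFace (hv : v ∈ maxFace V f) (hw : w ∈ maxFace V f) : f v = f w :=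
  le_antisymm ((mem_maxFace.1 hw).2 v (mem_maxFace.1 hv).1)
    ((mem_maxFace.1 hv).2 w (mem_maxFace.1 hw).1)

lemma apply_le_of_mem_convexHull_of_mem_maxFace (hx : x ∈ convexHull ℝ (V : Set E))
    (hv : v ∈ maxFace V f) : f x ≤ f v :=
  convexHull_min (fun w hw => (mem_maxFace.1 hv).2 w hw) (convex_halfSpace_le f.isLinear _) hx

/-- A convex combination of `V` attains the maximum `f v` only if all its weight sits on
`maxFace V f`. -/
lemma mem_convexHull_maxFace (hx : x ∈ convexHull ℝ (V : Set E)) (hv : v ∈ maxFace V f)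
    (hvx : f v ≤ f x) : x ∈ convexHull ℝ (maxFace V f : Set E) := by
  rw [Finset.convexHull_eq] at hx
  obtain ⟨c, hc0, hc1, rfl⟩ := hx
  have hterm : ∀ y ∈ V, 0 ≤ c y * (f v - f y) := fun y hy =>
    mul_nonneg (hc0 y hy) (sub_nonneg.2 ((mem_maxFace.1 hv).2 y hy))
  have hsum : ∑ y ∈ V, c y * (f v - f y) = 0 := by
    refine le_antisymm ?_ (sum_nonneg hterm)
    rw [centerMass_eq_of_sum_1 _ _ hc1, map_sum] at hvx
    simp only [mul_sub, sum_sub_distrib, ← sum_mul, hc1, one_mul, id, map_smul, smul_eq_mul]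
      at hvx ⊢
    linarith
  have hzero : ∀ y ∈ V, y ∉ maxFace V f → c y = 0 := by
    intro y hy hyF
    rcases mul_eq_zero.1 ((sum_eq_zero_iff_of_nonneg hterm).1 hsum y hy) with h | h
    · exact h
    · refine absurd (mem_maxFace.2 ⟨hy, fun z hz => ?_⟩) hyF
      linarith [(mem_maxFace.1 hv).2 z hz]
  rw [← centerMass_subset id maxFace_subset hzero]
  refine centerMass_mem_convexHull _ (fun y hy => hc0 y (maxFace_subset hy)) ?_ (fun y hy => hy)
  rw [sum_subset maxFace_subset hzero, hc1]
  exact one_pos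

lemma convexHull_maxFace (V : Finset E) (f : E →ₗ[ℝ] ℝ) :
    convexHull ℝ (maxFace V f : Set E) =
      {x ∈ convexHull ℝ (V : Set E) | ∀ y ∈ convexHull ℝ (V : Set E), f y ≤ f x} := by
  ext x
  constructor
  · intro hx
    obtain ⟨v, hv⟩ := (convexHull_nonempty_iff.1 ⟨x, hx⟩ : (maxFace V f : Set E).Nonempty)
    have hfx : f x = f v := convexHull_min (fun w hw => apply_eq_of_mem_maxFace hw hv)
      (convex_hyperplane f.isLinear _) hx
    refine ⟨convexHull_mono (coe_subset.2 maxFace_subset) hx, fun y hy => ?_⟩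
    exact hfx ▸ apply_le_of_mem_convexHull_of_mem_maxFace hy hv
  · rintro ⟨hx, hmax⟩
    obtain ⟨v, hv⟩ := maxFace_nonempty (f := f)
      (coe_nonempty.1 (convexHull_nonempty_iff.1 ⟨x, hx⟩))
    exact mem_convexHull_maxFace hx hv (hmax v (subset_convexHull ℝ _ (maxFace_subset hv)))

lemma mem_dualAnnihilator_vectorSpan_iff {s : Set E} :
    g ∈ (vectorSpan ℝ s).dualAnnihilator ↔ ∀ v ∈ s, ∀ w ∈ s, g v = g w := by
  rw [Submodule.mem_dualAnnihilator]
  change vectorSpan ℝ s ≤ LinearMap.ker g ↔ _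
  rw [vectorSpan_def, Submodule.span_le]
  simp only [Set.subset_def, Set.mem_vsub, SetLike.mem_coe, LinearMap.mem_ker]
  constructor
  · intro h v hv w hw
    simpa [sub_eq_zero] using h _ ⟨v, hv, w, hw, rfl⟩
  · rintro h _ ⟨v, hv, w, hw, rfl⟩
    simp [h v hv w hw]

/-- Tilting `f` towards `g` by the largest `t` that keeps the face of `f` maximal picks up a new
vertex, namely one where `(f v - f w) / (g w - c)` is minimal. -/
lemma exists_maxFace_ssubset_maxFace_add_smul {c : ℝ} (hg : ∀ v ∈ maxFace V f, g v = c)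
    {v₁ : E} (hv₁ : v₁ ∈ V) (hc : c < g v₁) :
    ∃ t : ℝ, 0 < t ∧ maxFace V f ⊂ maxFace V (f + t • g) := by
  obtain ⟨v, hv⟩ := maxFace_nonempty (f := f) ⟨v₁, hv₁⟩
  set T := V.filter fun w => c < g w
  have hT : ∀ w ∈ T, w ∈ V ∧ c < g w := fun w hw => mem_filter.1 hw
  have hfT : ∀ w ∈ T, f w < f v := by
    intro w hw
    refine lt_of_le_of_ne ((mem_maxFace.1 hv).2 w (hT w hw).1) fun hfw => ?_
    have hwF : w ∈ maxFace V f := mem_maxFace.2 ⟨(hT w hw).1, hfw ▸ (mem_maxFace.1 hv).2⟩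
    exact (hT w hw).2.ne' (hg w hwF)
  obtain ⟨w₀, hw₀, hmin⟩ := T.exists_min_image (fun w => (f v - f w) / (g w - c))
    ⟨v₁, mem_filter.2 ⟨hv₁, hc⟩⟩
  set t := (f v - f w₀) / (g w₀ - c)
  have hgw₀ : 0 < g w₀ - c := sub_pos.2 (hT w₀ hw₀).2
  have ht : 0 < t := div_pos (sub_pos.2 (hfT w₀ hw₀)) hgw₀
  have hle : ∀ w ∈ V, f w + t * g w ≤ f v + t * c := by
    intro w hw
    by_cases hcw : c < g w
    · have := (le_div_iff₀ (sub_pos.2 hcw)).1 (hmin w (mem_filter.2 ⟨hw, hcw⟩))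
      linarith
    · nlinarith [(mem_maxFace.1 hv).2 w hw]
  have hmem : ∀ w ∈ V, f w + t * g w = f v + t * c → w ∈ maxFace V (f + t • g) :=
    fun w hw hw' => mem_maxFace.2 ⟨hw, fun y hy => by simpa [hw'] using hle y hy⟩
  have hsub : maxFace V f ⊆ maxFace V (f + t • g) := fun w hw =>
    hmem w (maxFace_subset hw) (by rw [hg w hw, apply_eq_of_mem_maxFace hw hv])
  refine ⟨t, ht, (ssubset_iff_of_subset hsub).2 ⟨w₀, hmem w₀ (hT w₀ hw₀).1 ?_, ?_⟩⟩
  · have : t * (g w₀ - c) = f v - f w₀ := div_mul_cancel₀ _ hgw₀.ne'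
    linarith
  · exact fun hw₀F => (hfT w₀ hw₀).ne (apply_eq_of_mem_maxFace hw₀F hv)

lemma eq_zero_of_affineSpan_eq_top_of_forall_apply_eq {s : Set E} (hs : affineSpan ℝ s = ⊤)
    (hg : ∀ v ∈ s, ∀ w ∈ s, g v = g w) : g = 0 := by
  have h := mem_dualAnnihilator_vectorSpan_iff.2 hg
  rwa [← direction_affineSpan, hs, AffineSubspace.direction_top, Submodule.dualAnnihilator_top,
    Submodule.mem_bot] at h

lemma Finset.nonempty_of_affineSpan_eq_top (hV : affineSpan ℝ (V : Set E) = ⊤) : V.Nonempty := by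
  rw [← coe_nonempty, ← affineSpan_nonempty (k := ℝ), hV]
  exact ⟨0, AffineSubspace.mem_top ℝ E 0⟩

lemma exists_maxFace_ssubset_of_notMem_span (hV : affineSpan ℝ (V : Set E) = ⊤)
    (hgf : g ∉ Submodule.span ℝ {f}) {c : ℝ} (hg : ∀ v ∈ maxFace V f, g v = c) :
    ∃ f' : E →ₗ[ℝ] ℝ, f' ≠ 0 ∧ maxFace V f ⊂ maxFace V f' := by
  obtain ⟨v₁, hv₁, hne⟩ : ∃ v₁ ∈ V, g v₁ ≠ c := by
    by_contra! h
    have hg0 := eq_zero_of_affineSpan_eq_top_of_forall_apply_eq hV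
      fun v hv w hw => (h v hv).trans (h w hw).symm
    exact hgf (hg0 ▸ Submodule.zero_mem _)
  obtain ⟨h, c', hhf, hh, hlt⟩ : ∃ (h : E →ₗ[ℝ] ℝ) (c' : ℝ), h ∉ Submodule.span ℝ {f} ∧
      (∀ v ∈ maxFace V f, h v = c') ∧ c' < h v₁ := by
    rcases hne.lt_or_gt with hlt | hgt
    · refine ⟨-g, -c, fun hmem => hgf (by simpa using Submodule.neg_mem _ hmem), ?_, by simpa⟩
      simpa using hg
    · exact ⟨g, c, hgf, hg, hgt⟩
  obtain ⟨t, ht, hss⟩ := exists_maxFace_ssubset_maxFace_add_smul hh hv₁ hlt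
  refine ⟨f + t • h, fun h0 => hhf (Submodule.mem_span_singleton.2 ⟨-t⁻¹, ?_⟩), hss⟩
  rw [neg_smul, ← smul_neg, ← eq_neg_of_add_eq_zero_right h0, inv_smul_smul₀ ht.ne']

variable [FiniteDimensional ℝ E]

/-- Among the faces containing the face of `f`, one with the most vertices cannot be tilted
further, so it is a facet. -/
lemma exists_maxFace_superset_finrank_add_one (hV : affineSpan ℝ (V : Set E) = ⊤) (hf : f ≠ 0) :
    ∃ g : E →ₗ[ℝ] ℝ, g ≠ 0 ∧ maxFace V f ⊆ maxFace V g ∧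
      finrank ℝ (vectorSpan ℝ (maxFace V g : Set E)) + 1 = finrank ℝ E := by
  classical
  set C := V.powerset.filter fun S => ∃ g : E →ₗ[ℝ] ℝ, g ≠ 0 ∧ maxFace V f ⊆ S ∧ maxFace V g = S
  have hC : ∀ g : E →ₗ[ℝ] ℝ, g ≠ 0 → maxFace V f ⊆ maxFace V g → maxFace V g ∈ C :=
    fun g hg hfg => mem_filter.2 ⟨mem_powerset.2 maxFace_subset, g, hg, hfg, rfl⟩
  obtain ⟨S, hSC, hSmax⟩ := C.exists_max_image card ⟨_, hC f hf subset_rfl⟩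
  obtain ⟨-, g, hg, hfg, rfl⟩ := mem_filter.1 hSC
  refine ⟨g, hg, hfg, ?_⟩
  set W := vectorSpan ℝ (maxFace V g : Set E)
  have hdim := Subspace.finrank_add_finrank_dualAnnihilator_eq W
  have hgW : g ∈ W.dualAnnihilator := mem_dualAnnihilator_vectorSpan_iff.2
    fun v hv w hw => apply_eq_of_mem_maxFace hv hw
  have hW : W.dualAnnihilator ≠ ⊥ := fun h => hg ((Submodule.mem_bot ℝ).1 (h ▸ hgW))
  have hpos := Submodule.one_le_finrank_iff.2 hW
  by_contra hne
  obtain ⟨h, hhW, hhg⟩ : ∃ h ∈ W.dualAnnihilator, h ∉ Submodule.span ℝ {g} := by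
    refine SetLike.not_le_iff_exists.1 fun hle => ?_
    have := Submodule.finrank_mono hle
    rw [finrank_span_singleton hg] at this
    omega
  obtain ⟨s, hs⟩ := maxFace_nonempty (f := g) (Finset.nonempty_of_affineSpan_eq_top hV)
  obtain ⟨g', hg', hss⟩ := exists_maxFace_ssubset_of_notMem_span hV hhg
    fun v hv => mem_dualAnnihilator_vectorSpan_iff.1 hhW v hv s hs
  exact (hSmax _ (hC g' hg' (hfg.trans hss.subset))).not_gt (card_lt_card hss)

end MaxFace

lemma Convex.sum_mem_natCast_smul {E : Type*} [AddCommGroup E] [Module ℝ E] {P : Set E}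
    (hP : Convex ℝ P) {r : ℕ} (hr : 0 < r) {u : Fin r → E} (hu : ∀ i, u i ∈ P) :
    ∑ i, u i ∈ (r : ℝ) • P := by
  have hr' : (r : ℝ) ≠ 0 := Nat.cast_ne_zero.2 hr.ne'
  refine ⟨∑ i, (r : ℝ)⁻¹ • u i, hP.sum_mem (fun _ _ => by positivity) ?_ fun i _ => hu i, ?_⟩
  · simp [hr']
  · simp [← smul_sum, smul_inv_smul₀ hr']

/-- Replacing `u i` by any `y ∈ P` keeps the sum inside `r • P`, so a functional supporting
`r • P` at the sum is maximized over `P` at every `u i`. -/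
lemma exists_forall_le_of_sum_notMem_interior {E : Type*} [AddCommGroup E] [Module ℝ E]
    [TopologicalSpace E] [IsTopologicalAddGroup E] [ContinuousSMul ℝ E] [LocallyConvexSpace ℝ E]
    {P : Set E} (hP : Convex ℝ P) (hPint : (interior P).Nonempty) {r : ℕ} (hr : 0 < r)
    {u : Fin r → E} (hu : ∀ i, u i ∈ P) (hs : ∑ i, u i ∉ interior ((r : ℝ) • P)) :
    ∃ f : StrongDual ℝ E, f ≠ 0 ∧ ∀ i, ∀ y ∈ P, f y ≤ f (u i) := by
  classical
  obtain ⟨f, c, hf, hle, hge⟩ := geometric_hahn_banach_of_nonempty_interior (hP.smul (r : ℝ))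
    (convex_singleton (∑ i, u i)) (Set.disjoint_singleton_right.2 hs)
    (by rw [interior_smul₀ (Nat.cast_ne_zero.2 hr.ne')]; exact hPint.smul_set)
    (Set.singleton_nonempty _)
  refine ⟨f, hf, fun i y hy => ?_⟩
  have hupd := hle _ (hP.sum_mem_natCast_smul hr (u := Function.update u i y) fun j => by
    rw [Function.update_apply]; split_ifs <;> simp_all)
  have hsum := hge _ rfl
  rw [sum_update_of_mem (mem_univ i), map_add] at hupd
  rw [sum_eq_add_sum_sdiff_singleton_of_mem (mem_univ i), map_add] at hsum
  linarith

lemma IsLatticePt.sum_s3 {n : ℕ} {ι : Type*} (s : Finset ι) {u : ι → Fin n → ℝ}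
    (hu : ∀ i ∈ s, IsLatticePt (u i)) : IsLatticePt (∑ i ∈ s, u i) := by
  refine sum_induction u IsLatticePt (fun a b ha hb k => ?_) (fun k => ⟨0, by simp⟩) hu
  obtain ⟨ma, hma⟩ := ha k
  obtain ⟨mb, hmb⟩ := hb k
  exact ⟨ma + mb, by simp [hma, hmb]⟩

section Polytope

variable {d : ℕ} {V : Finset (Fin d → ℝ)}

lemma polyDim_eq_of_affineSpan_eq_top {P : Set (Fin d → ℝ)} (hP : affineSpan ℝ P = ⊤) :
    polyDim P = d := by
  rw [polyDim, hP, AffineSubspace.direction_top, finrank_top, finrank_fin_fun]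

lemma isFacetOf_convexHull_maxFace (hV : affineSpan ℝ (V : Set (Fin d → ℝ)) = ⊤)
    {g : (Fin d → ℝ) →ₗ[ℝ] ℝ}
    (hg : finrank ℝ (vectorSpan ℝ (maxFace V g : Set (Fin d → ℝ))) + 1 = d) :
    IsFacetOf (convexHull ℝ (maxFace V g : Set (Fin d → ℝ)))
      (convexHull ℝ (V : Set (Fin d → ℝ))) := by
  refine ⟨fun _ => ⟨LinearMap.toContinuousLinearMap g, convexHull_maxFace V g⟩, ?_, ?_⟩
  · exact convexHull_nonempty_iff.2 (coe_nonempty.2 (maxFace_nonempty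
      (Finset.nonempty_of_affineSpan_eq_top hV)))
  · rwa [polyDim_eq_of_affineSpan_eq_top ((affineSpan_convexHull _).trans hV), polyDim,
      affineSpan_convexHull, direction_affineSpan]

lemma exists_isFacetOf_forall_mem (hV : affineSpan ℝ (V : Set (Fin d → ℝ)) = ⊤) {ι : Type*}
    {u : ι → Fin d → ℝ} (hu : ∀ i, u i ∈ convexHull ℝ (V : Set (Fin d → ℝ)))
    {f : StrongDual ℝ (Fin d → ℝ)} (hf : f ≠ 0)
    (hfu : ∀ i, ∀ y ∈ convexHull ℝ (V : Set (Fin d → ℝ)), f y ≤ f (u i)) :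
    ∃ F, IsFacetOf F (convexHull ℝ (V : Set (Fin d → ℝ))) ∧ ∀ i, u i ∈ F := by
  obtain ⟨g, -, hfg, hg⟩ := exists_maxFace_superset_finrank_add_one hV
    (f := (f : (Fin d → ℝ) →ₗ[ℝ] ℝ)) (ContinuousLinearMap.coe_injective.ne hf)
  rw [finrank_fin_fun] at hg
  refine ⟨_, isFacetOf_convexHull_maxFace hV hg, fun i => convexHull_mono (coe_subset.2 hfg) ?_⟩
  obtain ⟨v, hv⟩ := maxFace_nonempty (f := (f : (Fin d → ℝ) →ₗ[ℝ] ℝ))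
    (Finset.nonempty_of_affineSpan_eq_top hV)
  exact mem_convexHull_maxFace (hu i) hv (hfu i v (subset_convexHull ℝ _ (maxFace_subset hv)))

theorem IsSpecialSimplex.sum_mem_interior_smul
    (hint : (interior (convexHull ℝ (V : Set (Fin d → ℝ)))).Nonempty)
    {r : ℕ} (hr : 0 < r) {u : Fin r → Fin d → ℝ}
    (hu : IsSpecialSimplex (convexHull ℝ (V : Set (Fin d → ℝ))) r u) :
    ∑ i, u i ∈ interior ((r : ℝ) • convexHull ℝ (V : Set (Fin d → ℝ))) := by
  by_contra hs
  have hV : affineSpan ℝ (V : Set (Fin d → ℝ)) = ⊤ := by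
    rwa [(convex_convexHull ℝ _).interior_nonempty_iff_affineSpan_eq_top, affineSpan_convexHull]
      at hint
  obtain ⟨f, hf, hfu⟩ := exists_forall_le_of_sum_notMem_interior (convex_convexHull ℝ _) hint hr
    (fun i => (hu.1 i).2) hs
  obtain ⟨F, hF, huF⟩ := exists_isFacetOf_forall_mem hV (fun i => (hu.1 i).2) hf hfu
  obtain ⟨i, hi, -⟩ := hu.2.2 F hF
  exact hi (huF i)

end Polytope

theorem special_simplices_same_barycenter_general {d r : ℕ} (hr : 0 < r)
    (Nb : Set (Fin d → ℝ)) (m : Fin d → ℝ)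
    (hG : IsGorensteinPoly Nb r m)
    (v w : Fin r → Fin d → ℝ)
    (hv : IsSpecialSimplex Nb r v)
    (hw : IsSpecialSimplex Nb r w) :
    ∑ i, v i = m ∧ ∑ i, w i = m ∧
    (r : ℝ)⁻¹ • (∑ i, v i) = (r : ℝ)⁻¹ • m ∧
    (r : ℝ)⁻¹ • (∑ i, w i) = (r : ℝ)⁻¹ • m := by
  obtain ⟨⟨V, -, -, rfl⟩, hm, hint, -⟩ := hG
  have hNb : (interior (convexHull ℝ (V : Set (Fin d → ℝ)))).Nonempty := by
    have hmint := (hint m hm).2 rfl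
    rw [interior_smul₀ (Nat.cast_ne_zero.2 hr.ne')] at hmint
    obtain ⟨x, hx, -⟩ := hmint
    exact ⟨x, hx⟩
  have hsum : ∀ u, IsSpecialSimplex (convexHull ℝ (V : Set (Fin d → ℝ))) r u → ∑ i, u i = m :=
    fun u hu => (hint _ (IsLatticePt.sum_s3 _ fun i _ => (hu.1 i).1)).1
      (IsSpecialSimplex.sum_mem_interior_smul hNb hr hu)
  exact ⟨hsum v hv, hsum w hw, by rw [hsum v hv], by rw [hsum w hw]⟩

/-- All special `(r-1)`-simplices of a `d`-dimensional Gorenstein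
polytope `∇` of index `r` have vertex sum equal to `m`, the unique interior lattice
point of `r∇`; in particular they all have the same barycenter `m / r`. -/
theorem special_simplices_same_barycenter {d r : ℕ} (hr : 0 < r)
    (Nb : Set (Fin d → ℝ)) (m : Fin d → ℝ)
    (hG : IsGorensteinPoly Nb r m)
    (hd : polyDim Nb = d)
    (v w : Fin r → Fin d → ℝ)
    (hv : IsSpecialSimplex Nb r v)
    (hw : IsSpecialSimplex Nb r w) :
    ∑ i, v i = m ∧ ∑ i, w i = m ∧
    (r : ℝ)⁻¹ • (∑ i, v i) = (r : ℝ)⁻¹ • m ∧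
    (r : ℝ)⁻¹ • (∑ i, w i) = (r : ℝ)⁻¹ • m :=
  special_simplices_same_barycenter_general hr Nb m hG v w hv hw
end
end

section
/- Let Δ_1, …, Δ_r and ∇_1, …, ∇_r be dual to each other centered nef-partitions in ℝ^d. Then for each i ∈ {1, …, r}, Δ_i = {0} if and only if ∇_i = {0}. -/
open Pointwise

noncomputable section

lemma latticePoly_bounded {n : ℕ} {P : Set (Fin n → ℝ)} (h : IsLatticePoly P) :
    Bornology.IsBounded P := by
  obtain ⟨V, -, -, rfl⟩ := h
  exact isBounded_convexHull.mpr V.finite_toSet.isBounded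

lemma mem_minkSum_of_mem {d r : ℕ} (Nb : Fin r → Set (Fin d → ℝ))
    (h0 : ∀ j, (0 : Fin d → ℝ) ∈ Nb j) {i : Fin r} {x : Fin d → ℝ}
    (hx : x ∈ Nb i) : x ∈ minkSum Nb := by
  refine ⟨fun j => if j = i then x else 0, fun j => ?_, ?_⟩
  · by_cases hj : j = i <;> simp [hj, hx, h0 j]
  · simp

lemma nef_zero_key {d r : ℕ} (Δ Nb : Fin r → Set (Fin d → ℝ))
    (h0 : ∀ j, (0 : Fin d → ℝ) ∈ Nb j) (hpoly : IsLatticePoly (minkSum Nb))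
    (i : Fin r) (hNd : Nb i = nefDual Δ i) (hΔ : Δ i = {0}) : Nb i = {0} := by
  obtain ⟨R, hR⟩ := ((latticePoly_bounded hpoly).subset_ball 0)
  ext y
  simp only [Set.mem_singleton_iff]
  constructor
  · intro hy
    by_contra hy0
    have hyn : 0 < ‖y‖ := by simpa [norm_pos_iff] using hy0
    obtain ⟨N, hN⟩ := exists_nat_gt (R / ‖y‖)
    have hmem : (N : ℝ) • y ∈ Nb i := by
      rw [hNd] at hy ⊢
      intro j x hx
      by_cases hj : i = j
      · subst hj
        rw [hΔ] at hx
        simp only [Set.mem_singleton_iff] at hx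
        subst hx
        simp [pairR]
      · have h1 : -(if i = j then (1:ℝ) else 0) ≤ pairR x y := hy j x hx
        have h2 : pairR x ((N : ℝ) • y) = (N : ℝ) * pairR x y := by
          simp only [pairR, Pi.smul_apply, smul_eq_mul, Finset.mul_sum]
          exact Finset.sum_congr rfl fun k _ => by ring
        rw [h2, if_neg hj]
        rw [if_neg hj, neg_zero] at h1
        simpa using mul_nonneg (Nat.cast_nonneg N) h1
    have := hR (mem_minkSum_of_mem Nb h0 hmem)
    rw [Metric.mem_ball, dist_zero_right, norm_smul] at this
    simp only [Real.norm_natCast] at this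
    have : R / ‖y‖ ≥ N := by
      rw [ge_iff_le, le_div_iff₀ hyn]
      linarith
    linarith
  · rintro rfl
    exact h0 i

/-- For dual centered nef-partitions, `Δ_i = {0}` iff `∇_i = {0}`. -/
theorem nef_partition_zero_iff {d r : ℕ}
    (Δ Nb : Fin r → Set (Fin d → ℝ))
    (h : AreDualNefPartitions Δ Nb) :
    ∀ i, Δ i = {0} ↔ Nb i = {0} := by
  obtain ⟨hΔ, hNb, hNd, hΔd⟩ := h
  intro i
  constructor
  · intro hi
    exact nef_zero_key Δ Nb (fun j => (hNb.1 j).2) hNb.2.1.1 i (hNd i) hi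
  · intro hi
    exact nef_zero_key Nb Δ (fun j => (hΔ.1 j).2) hΔ.2.1.1 i (hΔd i) hi
end
end

section
/- Let Δ_1, …, Δ_r and ∇_1, …, ∇_r be dual to each other centered nef-partitions in ℝ^d. Then for all i ≠ j, ℝ_{≥0}(∇_i) ∩ ℝ_{≥0}(∇_j) = {0}; that is, the convex cones spanned by ∇_i and ∇_j meet only in the origin. -/
open Pointwise

noncomputable section

lemma pairR_smul_right {n : ℕ} (c : ℝ) (x y : Fin n → ℝ) :
    pairR x (c • y) = c * pairR x y := by
  simp [pairR, Finset.mul_sum, mul_left_comm]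

lemma pairR_smul_left {n : ℕ} (c : ℝ) (x y : Fin n → ℝ) :
    pairR (c • x) y = c * pairR x y := by
  simp [pairR, Finset.mul_sum, mul_assoc]

lemma pairR_sum_left {n r : ℕ} (f : Fin r → Fin n → ℝ) (z : Fin n → ℝ) :
    pairR (∑ i, f i) z = ∑ i, pairR (f i) z := by
  simp [pairR, Finset.sum_mul, Finset.sum_apply]
  rw [Finset.sum_comm]

/-- For dual centered nef-partitions, the convex cones spanned by `∇_i`
and `∇_j` (for `i ≠ j`) meet only in the origin. -/
theorem nef_partition_cones_meet_in_origin {d r : ℕ}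
    (Δ Nb : Fin r → Set (Fin d → ℝ))
    (h : AreDualNefPartitions Δ Nb) :
    ∀ i j, i ≠ j →
      {x | ∃ c : ℝ, 0 ≤ c ∧ ∃ y ∈ Nb i, x = c • y} ∩
        {x | ∃ c : ℝ, 0 ≤ c ∧ ∃ y ∈ Nb j, x = c • y} = {0}  := by
  obtain ⟨hΔ, hNb, hNbdef, hΔdef⟩ := h
  intro i j hij
  ext z
  simp only [Set.mem_inter_iff, Set.mem_setOf_eq, Set.mem_singleton_iff]
  constructor
  · rintro ⟨⟨c, hc, y, hy, rfl⟩, ⟨c', hc', y', hy', hz'⟩⟩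
    rw [hNbdef i] at hy
    rw [hNbdef j] at hy'
    have key : ∀ k, ∀ x ∈ Δ k, 0 ≤ pairR x (c • y) := by
      intro k x hx
      rcases eq_or_ne k i with rfl | hk
      · rw [hz', pairR_smul_right]
        have h1 := hy' k x hx
        rw [if_neg (Ne.symm hij)] at h1
        simpa using mul_nonneg hc' (by linarith)
      · rw [pairR_smul_right]
        have h1 := hy k x hx
        rw [if_neg (fun hh => hk hh.symm)] at h1
        exact mul_nonneg hc (by linarith)
    have key2 : ∀ x ∈ minkSum Δ, 0 ≤ pairR x (c • y) := by
      rintro x ⟨f, hf, rfl⟩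
      rw [pairR_sum_left]
      exact Finset.sum_nonneg fun k _ => key k (f k) (hf k)
    have h0 : (0 : Fin d → ℝ) ∈ interior (minkSum Δ) := hΔ.2.1.2.1
    rw [mem_interior_iff_mem_nhds, Metric.mem_nhds_iff] at h0
    obtain ⟨ε, hε, hball⟩ := h0
    by_contra hz
    have hnorm : 0 < ‖c • y‖ := norm_pos_iff.mpr hz
    set t : ℝ := ε / (2 * ‖c • y‖) with ht
    have htpos : 0 < t := div_pos hε (by positivity)
    have hmem : (-t) • (c • y) ∈ minkSum Δ := by
      apply hball
      rw [Metric.mem_ball, dist_zero_right, norm_smul]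
      rw [norm_neg, Real.norm_of_nonneg htpos.le, ht]
      rw [div_mul_eq_mul_div]
      rw [div_lt_iff₀ (by positivity)]
      nlinarith
    have := key2 _ hmem
    rw [pairR_smul_left] at this
    have hpos : 0 < pairR (c • y) (c • y) := by
      obtain ⟨k, hk⟩ := Function.ne_iff.mp hz
      apply Finset.sum_pos' (fun m _ => mul_self_nonneg _)
      exact ⟨k, Finset.mem_univ k, mul_self_pos.mpr hk⟩
    nlinarith
  · rintro rfl
    exact ⟨⟨0, le_refl 0, 0, (hNb.1 i).2, (zero_smul ℝ _).symm⟩,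
           ⟨0, le_refl 0, 0, (hNb.1 j).2, (zero_smul ℝ _).symm⟩⟩
end
end
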